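/- arXiv:1311.6024 — 6 statements merged into one kernel-verified Lean document; each statement's English description precedes it below -/
import Mathlib

section
/- Let R > 0 and α ≥ 0, and let P_1, …, P_k be rooted paths with total regret Σ_{i=1}^k c^reg(P_i) ≤ α·k·R. Then there exist at most (α+1)·k rooted paths, each of regret at most R, whose union covers every node covered by some P_i. -/
/-- Total cost of traversing the list of nodes in order. -/
def pathCost {α : Type*} (c : α → α → ℝ) : List α → ℝ
  | [] => 0
  | [_] => 0
  | a :: b :: l => c a b + pathCost c (b :: l)

/-- A rooted path: a list of distinct nodes starting at the root `r`. -/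
def IsRootedPath {α : Type*} (r : α) (w : List α) : Prop :=
  w.head? = some r ∧ w.Nodup

/-- The regret of a rooted path: its cost minus the distance from `r` to its last node. -/
def pathRegret {α : Type*} (c : α → α → ℝ) (r : α) (w : List α) : ℝ :=
  pathCost c w - c r (w.getLastD r)

/-!
Regret is additive under cutting a rooted path `r, …, u, v, …` at the node `v` into the prefix
`r, …, u, v` and the shortcut path `r, v, …`. Cut `P_i` just before the first node `v` at which
the regret of the prefix exceeds `R`: the piece `r, …, u` has regret at most `R`, and the shortcut
`r, v, …` has regret less than `c^reg(P_i) - R`. Iterating, `P_i` is covered by at most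
`c^reg(P_i) / R + 1` paths of regret at most `R`, and summing over `i` gives `α k + k`.
-/

namespace List

theorem exists_eq_append_cons_of_not {α : Type*} (p : List α → Prop) (hnil : p [])
    (l : List α) (hl : ¬ p l) : ∃ xs v ys, l = xs ++ v :: ys ∧ p xs ∧ ¬ p (xs ++ [v]) := by
  induction l using List.reverseRecOn with
  | nil => exact absurd hnil hl
  | append_singleton l v ih =>
    by_cases hp : p l
    · exact ⟨l, v, [], rfl, hp, hl⟩
    · obtain ⟨xs, u, ys, rfl, hxs, hu⟩ := ih hp
      exact ⟨xs, u, ys ++ [v], by simp, hxs, hu⟩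

end List

section PathRegret

variable {α : Type*} (c : α → α → ℝ)

@[simp]
theorem pathCost_cons_cons (u v : α) (l : List α) :
    pathCost c (u :: v :: l) = c u v + pathCost c (v :: l) := rfl

theorem pathCost_append_cons (xs : List α) (v : α) (ys : List α) :
    pathCost c (xs ++ v :: ys) = pathCost c (xs ++ [v]) + pathCost c (v :: ys) := by
  induction xs with
  | nil => simp [pathCost]
  | cons u xs ih =>
    cases xs with
    | nil => simp [pathCost]
    | cons w xs => simp only [List.cons_append, pathCost_cons_cons] at ih ⊢; rw [ih]; ring

theorem pathRegret_append_cons (r : α) (w : List α) (v : α) (ys : List α) :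
    pathRegret c r (w ++ v :: ys) = pathRegret c r (w ++ [v]) + pathRegret c r (r :: v :: ys) := by
  simp only [pathRegret, List.getLastD_eq_getLast?, List.getLast?_append_cons,
    List.getLast?_singleton, pathCost_append_cons c w v ys, pathCost_cons_cons]
  simp only [List.getLast?_cons, Option.getD_some]
  ring

theorem pathRegret_root_singleton (r v : α) : pathRegret c r [r, v] = 0 := by
  simp [pathRegret, pathCost]

variable {c}

theorem dist_getLastD_le_pathCost (htri : ∀ u v w, c u v ≤ c u w + c w v)
    (hrefl : ∀ u, c u u = 0) (u : α) (l : List α) :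
    c u (l.getLastD u) ≤ pathCost c (u :: l) := by
  induction l generalizing u with
  | nil => simp [pathCost, hrefl]
  | cons v l ih =>
    rw [List.getLastD_cons, pathCost_cons_cons]
    linarith [htri u (l.getLastD v) v, ih v]

theorem pathRegret_nonneg (htri : ∀ u v w, c u v ≤ c u w + c w v) (hrefl : ∀ u, c u u = 0)
    (r : α) (l : List α) : 0 ≤ pathRegret c r (r :: l) := by
  have := dist_getLastD_le_pathCost htri hrefl r l
  rw [pathRegret, List.getLastD_cons]
  linarith

theorem exists_cover_pathRegret_le (htri : ∀ u v w, c u v ≤ c u w + c w v)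
    (hrefl : ∀ u, c u u = 0) {R : ℝ} (hR : 0 < R) (r : α) (w : List α)
    (hw : IsRootedPath r w) :
    ∃ Qs : List (List α), (Qs.length : ℝ) ≤ pathRegret c r w / R + 1 ∧
      (∀ q ∈ Qs, IsRootedPath r q ∧ pathRegret c r q ≤ R) ∧
      ∀ v ∈ w.tail, ∃ q ∈ Qs, v ∈ q.tail := by
  induction hlen : w.length using Nat.strong_induction_on generalizing w with
  | _ n ih =>
    obtain ⟨l, rfl⟩ := List.head?_eq_some_iff.mp hw.1
    by_cases hle : pathRegret c r (r :: l) ≤ R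
    · refine ⟨[r :: l], ?_, by simpa [hw] using hle, fun v hv => ⟨r :: l, by simp, hv⟩⟩
      have : 0 ≤ pathRegret c r (r :: l) / R :=
        div_nonneg (pathRegret_nonneg htri hrefl r l) hR.le
      simpa using this
    obtain ⟨xs, v, ys, rfl, hxs, hxsv⟩ := List.exists_eq_append_cons_of_not
      (fun xs => pathRegret c r (r :: xs) ≤ R)
      (by simp [pathRegret, pathCost, hrefl, hR.le]) l hle
    have hxs_ne : xs ≠ [] := by
      rintro rfl
      exact hxsv (by simp [pathRegret_root_singleton, hR.le])
    have hsplit : R + pathRegret c r (r :: v :: ys) < pathRegret c r (r :: (xs ++ v :: ys)) := by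
      have := pathRegret_append_cons c r (r :: xs) v ys
      simp only [List.cons_append] at this hxsv
      linarith
    have hnodup := hw.2
    have hshort : IsRootedPath r (r :: v :: ys) :=
      ⟨rfl, hnodup.sublist (by simp)⟩
    obtain ⟨Qs, hQs_len, hQs_good, hQs_cover⟩ :=
      ih _ (by subst hlen; simp [List.length_pos_iff.mpr hxs_ne]) _ hshort rfl
    refine ⟨(r :: xs) :: Qs, ?_, ?_, ?_⟩
    · have : pathRegret c r (r :: v :: ys) / R + 1 <
          pathRegret c r (r :: (xs ++ v :: ys)) / R := by
        rw [div_add_one hR.ne', div_lt_div_iff_of_pos_right hR]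
        linarith
      simp only [List.length_cons, Nat.cast_add, Nat.cast_one]
      linarith
    · intro q hq
      rcases List.mem_cons.mp hq with rfl | hq
      · exact ⟨⟨rfl, hnodup.sublist (by simp)⟩, hxs⟩
      · exact hQs_good q hq
    · intro u hu
      rcases List.mem_append.mp hu with hu | hu
      · exact ⟨r :: xs, by simp, hu⟩
      · obtain ⟨q, hq, huq⟩ := hQs_cover u hu
        exact ⟨q, List.mem_cons_of_mem _ hq, huq⟩

end PathRegret

theorem average_regret_to_max_regret_general {α : Type*} (c : α → α → ℝ) (r : α)
    (htri : ∀ u v w, c u v ≤ c u w + c w v) (hrefl : ∀ u, c u u = 0)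
    (R : ℝ) (hR : 0 < R) (a : ℝ) (k : ℕ)
    (P : Fin k → List α) (hP : ∀ i, IsRootedPath r (P i))
    (hreg : ∑ i, pathRegret c r (P i) ≤ a * k * R) :
    ∃ (n : ℕ) (Q : Fin n → List α),
      (n : ℝ) ≤ (a + 1) * k ∧
      (∀ j, IsRootedPath r (Q j) ∧ pathRegret c r (Q j) ≤ R) ∧
      (∀ (i : Fin k), ∀ v ∈ (P i).tail, ∃ j, v ∈ (Q j).tail) := by
  choose Qs hlen hgood hcover using
    fun i => exists_cover_pathRegret_le htri hrefl hR r (P i) (hP i)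
  set Q := (List.ofFn Qs).flatten
  have hmem : ∀ q, q ∈ Q ↔ ∃ i, q ∈ Qs i := by simp [Q, List.mem_flatten]
  refine ⟨Q.length, Q.get, ?_, fun j => ?_, fun i v hv => ?_⟩
  · calc (Q.length : ℝ) = ∑ i, ((Qs i).length : ℝ) := by
          simp [Q, List.length_flatten, List.sum_ofFn]
      _ ≤ ∑ i, (pathRegret c r (P i) / R + 1) := Finset.sum_le_sum fun i _ => hlen i
      _ = (∑ i, pathRegret c r (P i)) / R + k := by
          simp [Finset.sum_add_distrib, Finset.sum_div]
      _ ≤ a * k + k := by grw [div_le_iff₀ hR |>.mpr hreg]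
      _ = (a + 1) * k := by ring
  · obtain ⟨i, hi⟩ := (hmem _).mp (Q.get_mem j)
    exact hgood i _ hi
  · obtain ⟨q, hq, hvq⟩ := hcover i v hv
    obtain ⟨j, rfl⟩ := List.mem_iff_get.mp ((hmem q).mpr ⟨i, hq⟩)
    exact ⟨j, hvq⟩

/-- given rooted paths `P_1, …, P_k` with total regret at most `α·k·R` (with
`R > 0`, `α ≥ 0`), there exist at most `(α+1)·k` rooted paths, each of regret at most `R`,
whose union covers every node covered by some `P_i`. -/
theorem average_regret_to_max_regret {α : Type*} [Fintype α] (c : α → α → ℝ) (r : α)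
    (hsymm : ∀ u v, c u v = c v u) (hnn : ∀ u v, 0 ≤ c u v)
    (htri : ∀ u v w, c u v ≤ c u w + c w v) (hrefl : ∀ u, c u u = 0)
    (hpos : ∀ u v, u ≠ v → 0 < c u v)
    (R : ℝ) (hR : 0 < R) (a : ℝ) (ha : 0 ≤ a) (k : ℕ) (hk : 0 < k)
    (P : Fin k → List α) (hP : ∀ i, IsRootedPath r (P i))
    (hreg : ∑ i, pathRegret c r (P i) ≤ a * k * R) :
    ∃ (n : ℕ) (Q : Fin n → List α),
      (n : ℝ) ≤ (a + 1) * k ∧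
      (∀ j, IsRootedPath r (Q j) ∧ pathRegret c r (Q j) ≤ R) ∧
      (∀ (i : Fin k), ∀ v ∈ (P i).tail, ∃ j, v ∈ (Q j).tail) :=
  average_regret_to_max_regret_general c r htri hrefl R hR a k P hP hreg
end

section
/- For any rooted path P, the total cost of the red edges of P is at most 3/2 times the regret of P: Σ_{e red on P} c_e ≤ (3/2)·c^reg(P). -/
/-- The `i`-th edge `(w_{i−1}, w_i)` of the path `w` (for `1 ≤ i < w.length`) is red if
there exist indices `j ≤ i−1` and `l ≥ i` with `D_{w_j} ≥ D_{w_l}`. -/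
def redEdge {α : Type*} (c : α → α → ℝ) (r : α) (w : List α) (i : ℕ) : Prop :=
  ∃ j l, j < i ∧ i ≤ l ∧ l < w.length ∧ c r (w.getD l r) ≤ c r (w.getD j r)

/-!
Put `f i = D_{w_i}` and `e i = c(w_{i-1}, w_i) ≥ |f i - f (i - 1)|`. An edge `i` is blue exactly
when `f j < f l` for all `j < i ≤ l`, so the red edges fall into maximal blocks `(a, b]` whose red
witnesses `j, l` lie in `[a, b]`. Inside such a block every level strictly between `f a` and `f b`
is crossed downwards, so the total descent `Δ` of the block is at least `f b - f a`; with the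
ascent `U = f b - f a + Δ` this gives `3 (f b - f a) ≤ U + Δ ≤ ∑ e`, i.e. the block costs at most
`3/2` of its regret `∑ e - (f b - f a)`. A blue edge costs nothing and adds
`e i - (f i - f (i - 1)) ≥ 0` to the regret.
-/

open Finset MeasureTheory

theorem sum_Ioc_sub_pred {M : Type*} [AddCommGroup M] (g : ℕ → M) {a b : ℕ} (hab : a ≤ b) :
    ∑ i ∈ Ioc a b, (g i - g (i - 1)) = g b - g a := by
  rw [← Ico_add_one_add_one_eq_Ioc, ← sum_Ico_add']
  simpa using sum_Ico_sub g hab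

section RedSteps

variable (f : ℕ → ℝ)

-- `redEdge c r w` is `IsRedStep (fun i => c r (w.getD i r)) w.length` by definition.
def IsRedStep (N i : ℕ) : Prop :=
  ∃ j l, j < i ∧ i ≤ l ∧ l < N ∧ f l ≤ f j

theorem exists_step_down_across {x : ℝ} {j i : ℕ} (hji : j < i) (hj : x ≤ f j) (hi : f i < x) :
    ∃ k ∈ Ioc j i, f k < x ∧ x ≤ f (k - 1) := by
  induction i, hji using Nat.le_induction with
  | base => exact ⟨j + 1, by simp, hi, by simpa using hj⟩
  | succ i hji ih =>
    by_cases hxi : x ≤ f i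
    · exact ⟨i + 1, mem_Ioc.2 ⟨by omega, le_rfl⟩, hi, by simpa using hxi⟩
    · obtain ⟨k, hk, hk'⟩ := ih (not_le.1 hxi)
      exact ⟨k, Ioc_subset_Ioc_right (by omega) hk, hk'⟩

theorem Ioo_subset_biUnion_steps_down {a b : ℕ} (hab : a ≤ b)
    (hdrop : ∀ i ∈ Ioc a b, ∃ j l, a ≤ j ∧ j < i ∧ i ≤ l ∧ l ≤ b ∧ f l ≤ f j) :
    Set.Ioo (f a) (f b) ⊆ ⋃ i ∈ Ioc a b, Set.Ioc (f i) (f (i - 1)) := by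
  rintro x ⟨hax, hxb⟩
  set m := Nat.findGreatest (fun k => f k < x) b
  have hm : f m < x := Nat.findGreatest_spec (P := fun k => f k < x) hab hax
  have ham : a ≤ m := Nat.le_findGreatest (P := fun k => f k < x) hab hax
  have hmb : m < b := (Nat.findGreatest_le b).lt_of_ne fun h : m = b => by rw [h] at hm; linarith
  obtain ⟨j, l, haj, hjm, hml, hlb, hlj⟩ := hdrop (m + 1) (mem_Ioc.2 ⟨by omega, hmb⟩)
  have hxl : x ≤ f l :=
    not_lt.1 (Nat.findGreatest_is_greatest (P := fun k => f k < x) (by omega) hlb)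
  have hjm' : j < m := (Nat.lt_succ_iff.1 hjm).lt_of_ne fun h => by rw [h] at hlj; linarith
  obtain ⟨k, hk, hk'⟩ := exists_step_down_across f hjm' (hxl.trans hlj) hm
  exact Set.mem_iUnion₂.2 ⟨k, Ioc_subset_Ioc haj hmb.le hk, hk'⟩

theorem sub_le_sum_posPart_of_Ioo_subset_biUnion {ι : Type*} (s : Finset ι) (g h : ι → ℝ)
    {x y : ℝ} (hsub : Set.Ioo x y ⊆ ⋃ i ∈ s, Set.Ioc (g i) (h i)) :
    y - x ≤ ∑ i ∈ s, (h i - g i)⁺ := by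
  have hvol : ENNReal.ofReal (y - x) ≤ ENNReal.ofReal (∑ i ∈ s, (h i - g i)⁺) :=
    calc ENNReal.ofReal (y - x) = volume (Set.Ioo x y) := Real.volume_Ioo.symm
      _ ≤ ∑ i ∈ s, volume (Set.Ioc (g i) (h i)) :=
        (measure_mono hsub).trans (measure_biUnion_finset_le s _)
      _ = ENNReal.ofReal (∑ i ∈ s, (h i - g i)⁺) := by
        rw [ENNReal.ofReal_sum_of_nonneg fun i _ => posPart_nonneg _]
        simp [Real.volume_Ioc, posPart_def]
  rcases ENNReal.ofReal_le_ofReal_iff'.1 hvol with hle | hle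
  · exact hle
  · exact hle.trans (sum_nonneg fun i _ => posPart_nonneg _)

theorem sub_le_sum_negPart_of_steps_down {a b : ℕ} (hab : a ≤ b)
    (hdrop : ∀ i ∈ Ioc a b, ∃ j l, a ≤ j ∧ j < i ∧ i ≤ l ∧ l ≤ b ∧ f l ≤ f j) :
    f b - f a ≤ ∑ i ∈ Ioc a b, (f i - f (i - 1))⁻ := by
  simpa only [← posPart_neg, neg_sub] using
    sub_le_sum_posPart_of_Ioo_subset_biUnion _ _ _ (Ioo_subset_biUnion_steps_down f hab hdrop)

theorem sum_le_regret_of_steps_down (e : ℕ → ℝ) (he : ∀ i, |f i - f (i - 1)| ≤ e i)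
    {a b : ℕ} (hab : a ≤ b)
    (hdrop : ∀ i ∈ Ioc a b, ∃ j l, a ≤ j ∧ j < i ∧ i ≤ l ∧ l ≤ b ∧ f l ≤ f j) :
    ∑ i ∈ Ioc a b, e i ≤ 3 / 2 * (∑ i ∈ Ioc a b, e i - (f b - f a)) := by
  have hdescent := sub_le_sum_negPart_of_steps_down f hab hdrop
  have hstep (i : ℕ) : (f i - f (i - 1)) + 2 * (f i - f (i - 1))⁻ ≤ e i := by
    linarith [he i, posPart_sub_negPart (f i - f (i - 1)), posPart_add_negPart (f i - f (i - 1))]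
  have hsum := sum_le_sum fun i (_ : i ∈ Ioc a b) => hstep i
  rw [sum_add_distrib, ← mul_sum, sum_Ioc_sub_pred f hab] at hsum
  linarith

theorem not_isRedStep_zero (N : ℕ) : ¬ IsRedStep f N 0 :=
  fun ⟨j, _, hj, _⟩ => Nat.not_lt_zero j hj

theorem not_isRedStep_self (N : ℕ) : ¬ IsRedStep f N N :=
  fun ⟨_, _, _, hNl, hlN, _⟩ => (hNl.trans_lt hlN).false

theorem exists_step_down_within {N a b i : ℕ} (ha : ¬ IsRedStep f N a)
    (hb : ¬ IsRedStep f N (b + 1)) (hi : IsRedStep f N i) (hai : a < i) (hib : i ≤ b) :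
    ∃ j l, a ≤ j ∧ j < i ∧ i ≤ l ∧ l ≤ b ∧ f l ≤ f j := by
  obtain ⟨j, l, hji, hil, hlN, hlj⟩ := hi
  refine ⟨j, l, ?_, hji, hil, ?_, hlj⟩
  · by_contra hja
    exact ha ⟨j, l, by omega, by omega, hlN, hlj⟩
  · by_contra hlb
    exact hb ⟨j, l, by omega, by omega, hlN, hlj⟩

theorem exists_last_not_isRedStep (N b : ℕ) :
    ∃ a ≤ b, ¬ IsRedStep f N a ∧ ∀ i ∈ Ioc a b, IsRedStep f N i := by
  classical
  refine ⟨Nat.findGreatest (¬ IsRedStep f N ·) b, Nat.findGreatest_le b,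
    Nat.findGreatest_spec (P := (¬ IsRedStep f N ·)) (Nat.zero_le b) (not_isRedStep_zero f N),
    fun i hi => ?_⟩
  obtain ⟨hai, hib⟩ := mem_Ioc.1 hi
  simpa using Nat.findGreatest_is_greatest (P := (¬ IsRedStep f N ·)) hai hib

open scoped Classical in
theorem sum_ite_isRedStep_le (e : ℕ → ℝ) (he : ∀ i, |f i - f (i - 1)| ≤ e i) (N b : ℕ)
    (hb : ¬ IsRedStep f N (b + 1)) :
    ∑ i ∈ Ioc 0 b, (if IsRedStep f N i then e i else 0) ≤
      3 / 2 * (∑ i ∈ Ioc 0 b, e i - (f b - f 0)) := by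
  induction b using Nat.strong_induction_on with
  | _ b ih =>
  obtain ⟨a, hab, ha, hred⟩ := exists_last_not_isRedStep f N b
  have hprefix : ∑ i ∈ Ioc 0 a, (if IsRedStep f N i then e i else 0) ≤
      3 / 2 * (∑ i ∈ Ioc 0 a, e i - (f a - f 0)) := by
    rcases a with _ | m
    · simp
    · have hm := ih m (by omega) ha
      have hstep : f (m + 1) - f m ≤ e (m + 1) := le_of_abs_le (by simpa using he (m + 1))
      rw [sum_Ioc_succ_top (Nat.zero_le m), sum_Ioc_succ_top (Nat.zero_le m), if_neg ha]
      linarith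
  have hblock := sum_le_regret_of_steps_down f e he hab
    fun i hi => exists_step_down_within f ha hb (hred i hi) (mem_Ioc.1 hi).1 (mem_Ioc.1 hi).2
  rw [← sum_Ioc_consecutive _ (Nat.zero_le a) hab, ← sum_Ioc_consecutive _ (Nat.zero_le a) hab,
    sum_congr rfl fun i hi => if_pos (hred i hi)]
  linarith

end RedSteps

theorem pathCost_eq_sum_Ico {α : Type*} (c : α → α → ℝ) (d : α) (w : List α) :
    pathCost c w = ∑ i ∈ Ico 1 w.length, c (w.getD (i - 1) d) (w.getD i d) := by
  induction w with
  | nil => simp [pathCost]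
  | cons a t ih =>
    rcases t with _ | ⟨b, l⟩
    · simp [pathCost]
    · rw [pathCost, ih]
      simp only [sum_Ico_eq_sum_range, List.length_cons, Nat.add_sub_cancel]
      rw [sum_range_succ' _ (l.length)]
      simp [Nat.add_comm 1, add_comm (c a b)]

theorem abs_sub_le_of_triangle {α : Type*} (c : α → α → ℝ) (hsymm : ∀ u v, c u v = c v u)
    (htri : ∀ u v w, c u v ≤ c u w + c w v) (r u v : α) : |c r u - c r v| ≤ c v u := by
  rw [abs_sub_le_iff]
  constructor
  · linarith [htri r u v]
  · linarith [htri r v u, hsymm u v]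

open scoped Classical in
theorem red_cost_le_regret_general {α : Type*} (c : α → α → ℝ) (r : α)
    (hsymm : ∀ u v, c u v = c v u)
    (htri : ∀ u v w, c u v ≤ c u w + c w v) (hrefl : ∀ u, c u u = 0)
    (w : List α) (hw : IsRootedPath r w) :
    ∑ i ∈ Finset.Ico 1 w.length,
        (if redEdge c r w i then c (w.getD (i-1) r) (w.getD i r) else 0)
      ≤ (3/2) * pathRegret c r w := by
  obtain ⟨t, rfl⟩ : ∃ t, w = r :: t := by
    rcases w with _ | ⟨a, t⟩
    · simp [IsRootedPath] at hw
    · obtain rfl : a = r := by simpa [IsRootedPath] using hw.1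
      exact ⟨t, rfl⟩
  have he (i : ℕ) : |c r ((r :: t).getD i r) - c r ((r :: t).getD (i - 1) r)| ≤
      c ((r :: t).getD (i - 1) r) ((r :: t).getD i r) :=
    abs_sub_le_of_triangle c hsymm htri r _ _
  have hedges : Ico 1 (r :: t).length = Ioc 0 t.length := by
    ext i; simp only [mem_Ico, mem_Ioc, List.length_cons]; omega
  have key := sum_ite_isRedStep_le _ _ he _ t.length (not_isRedStep_self _ (t.length + 1))
  have hlast : (r :: t).getLastD r = (r :: t).getD t.length r := by
    simp [List.getLastD_eq_getLast?, List.getLast?_eq_getElem?]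
  have hroot : (r :: t).getD 0 r = r := rfl
  rw [hroot, hrefl, sub_zero] at key
  rw [pathRegret, pathCost_eq_sum_Ico c r, hedges, hlast]
  exact key

open scoped Classical in
/-- for any rooted path `P`, the total cost of the red edges of `P` is at most
`3/2` times the regret of `P`. -/
theorem red_cost_le_regret {α : Type*} [Fintype α] (c : α → α → ℝ) (r : α)
    (hsymm : ∀ u v, c u v = c v u) (hnn : ∀ u v, 0 ≤ c u v)
    (htri : ∀ u v w, c u v ≤ c u w + c w v) (hrefl : ∀ u, c u u = 0)
    (hpos : ∀ u v, u ≠ v → 0 < c u v)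
    (w : List α) (hw : IsRootedPath r w) :
    ∑ i ∈ Finset.Ico 1 w.length,
        (if redEdge c r w i then c (w.getD (i-1) r) (w.getD i r) else 0)
      ≤ (3/2) * pathRegret c r w :=
  red_cost_le_regret_general c r hsymm htri hrefl w hw
end

section
/- Let δ > 0 and R = 1 + δ. Assume D_v ≥ 1 for all v ∈ V, and for i ≥ 1 let V_i = {v ∈ V : 2^{i−1} ≤ D_v < 2^i} (so the V_i partition V). Let N ≥ 1 and suppose that for every i ≥ 1 there are rooted paths P^i_1, …, P^i_N (possibly trivial), all of whose non-root nodes lie in V_i, whose union covers V_i, and each of which has regret at most δ·2^{i−2}. Let M = ⌈log₂(3 + 8/δ)⌉. Then there exist at most M·N walks starting at r that together cover V, such that every node v ∈ V is reached at travel time at most R·D_v along the walk covering it (the travel time of v is the total distance traveled from r until first reaching v). -/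
/-- The distance travelled along the walk `w` from its first node until first reaching `v`. -/
def prefixCost {α : Type*} [DecidableEq α] (c : α → α → ℝ) (w : List α) (v : α) : ℝ :=
  pathCost c (w.take (w.idxOf v + 1))

/-!
Split the dyadic classes `V_i` by the residue of `i - 1` modulo `M`. For each residue `m` and each
index `j`, one walk runs through `P^{m+1}_j, P^{m+1+M}_j, P^{m+1+2M}_j, …`, returning to `r` after
each path. The closed tour through `P^i_j` costs at most twice the largest `D` on it plus its
regret, i.e. `O(2^i)`; these costs grow geometrically with ratio `2^M`, so by the choice of `M` the
tours preceding class `i` cost at most `δ·2^{i-2}`. A node `v ∈ V_i` is then reached after at most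
that, plus `D_v + δ·2^{i-2}` along its own path, and `δ·2^{i-1} ≤ δ·D_v`.
-/

section RootedWalks

variable {α : Type*} (c : α → α → ℝ)

theorem pathCost_append_cons_s8 (d : α) {l : List α} (hl : l ≠ []) (a : α) (t : List α) :
    pathCost c (l ++ a :: t) = pathCost c l + c (l.getLastD d) a + pathCost c (a :: t) := by
  induction l with
  | nil => exact absurd rfl hl
  | cons x l ih =>
    cases l with
    | nil => simp [pathCost]
    | cons y l =>
      simp only [List.cons_append, pathCost, List.getLastD_cons] at ih ⊢
      rw [ih (List.cons_ne_nil _ _)]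
      ring

theorem dist_le_pathCost (htri : ∀ u v w, c u v ≤ c u w + c w v) (hrefl : ∀ u, c u u = 0)
    (a : α) (t : List α) : c a (t.getLastD a) ≤ pathCost c (a :: t) := by
  induction t generalizing a with
  | nil => simp [pathCost, hrefl]
  | cons b t ih =>
    calc c a ((b :: t).getLastD a) = c a (t.getLastD b) := by rw [List.getLastD_cons]
      _ ≤ c a b + c b (t.getLastD b) := htri _ _ _
      _ ≤ pathCost c (a :: b :: t) := by simp only [pathCost]; linarith [ih b]

section PrefixCost

variable [DecidableEq α] {v : α}

theorem prefixCost_append_of_mem {l₁ : List α} (l₂ : List α) (hv : v ∈ l₁) :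
    prefixCost c (l₁ ++ l₂) v = prefixCost c l₁ v := by
  unfold prefixCost
  rw [List.idxOf_append_of_mem hv, List.take_append_of_le_length (List.idxOf_lt_length_of_mem hv)]

theorem prefixCost_append_cons_of_not_mem (d : α) {l : List α} (hl : l ≠ []) (a : α) (t : List α)
    (hv : v ∉ l) :
    prefixCost c (l ++ a :: t) v = pathCost c l + c (l.getLastD d) a + prefixCost c (a :: t) v := by
  unfold prefixCost
  rw [List.idxOf_append_of_notMem hv, Nat.add_assoc, List.take_length_add_append,
    List.take_succ_cons, pathCost_append_cons_s8 c d hl]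

theorem prefixCost_add_le_pathCost (htri : ∀ u v w, c u v ≤ c u w + c w v)
    (hrefl : ∀ u, c u u = 0) {l : List α} (hv : v ∈ l) (d : α) :
    prefixCost c l v + c v (l.getLastD d) ≤ pathCost c l := by
  induction l with
  | nil => simp at hv
  | cons a t ih =>
    by_cases hav : a = v
    · subst hav
      simp only [prefixCost, List.idxOf_cons_self, List.take_succ_cons, List.take_zero, pathCost,
        zero_add, List.getLastD_cons]
      exact dist_le_pathCost c htri hrefl a t
    · have hvt : v ∈ t := (List.mem_cons.1 hv).resolve_left (Ne.symm hav)
      obtain ⟨b, t, rfl⟩ := List.exists_cons_of_ne_nil (List.ne_nil_of_mem hvt)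
      have h := prefixCost_append_cons_of_not_mem c d (List.cons_ne_nil a []) b t
        (by simpa using Ne.symm hav)
      simp only [List.singleton_append, pathCost, List.getLastD_cons, List.getLastD_nil,
        zero_add] at h ih ⊢
      linarith [ih hvt]

end PrefixCost

def tourCost (r : α) (l : List α) : ℝ :=
  pathCost c l + c (l.getLastD r) r

section Tours

variable {r : α} (hrefl : ∀ u, c u u = 0)
include hrefl

theorem tourCost_nil : tourCost c r [] = 0 := by
  simp [tourCost, pathCost, hrefl]

theorem tourCost_append {l₁ l₂ : List α} (h₂ : l₂.head? = some r) :
    tourCost c r (l₁ ++ l₂) = tourCost c r l₁ + tourCost c r l₂ := by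
  obtain rfl | hl := eq_or_ne l₁ []
  · simp [tourCost_nil c hrefl]
  obtain ⟨t, rfl⟩ : ∃ t, l₂ = r :: t := ⟨_, List.eq_cons_of_mem_head? h₂⟩
  simp only [tourCost, pathCost_append_cons_s8 c r hl, List.getLastD_eq_getLast?,
    List.getLast?_append_of_ne_nil _ (List.cons_ne_nil _ _)]
  ring

theorem prefixCost_append_of_not_mem [DecidableEq α] {v : α} {l₁ l₂ : List α} (hv : v ∉ l₁)
    (h₂ : l₂.head? = some r) :
    prefixCost c (l₁ ++ l₂) v = tourCost c r l₁ + prefixCost c l₂ v := by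
  obtain rfl | hl := eq_or_ne l₁ []
  · simp [tourCost_nil c hrefl]
  rw [List.eq_cons_of_mem_head? h₂, prefixCost_append_cons_of_not_mem c r hl _ _ hv]
  rfl

variable {g : ℕ → List α} (hg : ∀ k, (g k).head? = some r)
include hg

theorem tourCost_flatMap_range (n : ℕ) :
    tourCost c r ((List.range n).flatMap g) = ∑ k ∈ Finset.range n, tourCost c r (g k) := by
  induction n with
  | zero => simp [tourCost_nil c hrefl]
  | succ n ih =>
    rw [List.range_succ, List.flatMap_append, List.flatMap_singleton,
      tourCost_append c hrefl (hg n), ih, Finset.sum_range_succ]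

theorem prefixCost_flatMap_range [DecidableEq α] {v : α} {k₀ n : ℕ} (hk : k₀ < n)
    (hv : v ∈ g k₀) (hfirst : ∀ k < k₀, v ∉ g k) :
    prefixCost c ((List.range n).flatMap g) v =
      ∑ k ∈ Finset.range k₀, tourCost c r (g k) + prefixCost c (g k₀) v := by
  obtain ⟨d, rfl⟩ : ∃ d, n = k₀ + 1 + d := ⟨n - (k₀ + 1), by omega⟩
  rw [List.range_add, List.range_succ, List.flatMap_append, List.flatMap_append,
    List.flatMap_singleton, List.append_assoc,
    prefixCost_append_of_not_mem c (r := r) hrefl (by simpa using hfirst)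
      (by simp [List.head?_append, hg]),
    prefixCost_append_of_mem c _ hv, tourCost_flatMap_range c hrefl hg]

end Tours

theorem tourCost_le_pathRegret_add {r : α} (hsymm : ∀ u v, c u v = c v u) {l : List α}
    (hl : l ≠ []) {B : ℝ} (hB : ∀ u ∈ l, c r u ≤ B) :
    tourCost c r l ≤ pathRegret c r l + 2 * B := by
  have hlast : l.getLastD r ∈ l := by
    rw [List.getLastD_eq_getLast?, List.getLast?_eq_some_getLast hl]
    exact List.getLast_mem hl
  have := hB _ hlast
  rw [tourCost, pathRegret, hsymm (l.getLastD r)]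
  linarith

theorem prefixCost_le_add_pathRegret [DecidableEq α] {r v : α}
    (htri : ∀ u v w, c u v ≤ c u w + c w v) (hrefl : ∀ u, c u u = 0) {l : List α} (hv : v ∈ l) :
    prefixCost c l v ≤ c r v + pathRegret c r l := by
  have := prefixCost_add_le_pathCost c htri hrefl hv r
  have := htri r (l.getLastD r) v
  rw [pathRegret]
  linarith

theorem sum_pow_add_mul_mul_sub_one_le {x : ℝ} (hx : 0 ≤ x) (e M n : ℕ) :
    (∑ k ∈ Finset.range n, x ^ (e + k * M)) * (x ^ M - 1) ≤ x ^ (e + n * M) := by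
  have hpow : ∀ k, x ^ (e + k * M) = x ^ e * (x ^ M) ^ k := fun k => by
    rw [pow_add, ← pow_mul, mul_comm k]
  simp_rw [hpow, ← Finset.mul_sum, mul_assoc, geom_sum_mul]
  nlinarith [pow_nonneg hx e]

theorem exists_forall_lt_two_pow {ι : Type*} [Finite ι] (f : ι → ℝ) :
    ∃ K : ℕ, ∀ i, f i < 2 ^ K := by
  obtain ⟨B, hB⟩ := (Set.finite_range f).bddAbove
  obtain ⟨K, hK⟩ := pow_unbounded_of_one_lt B one_lt_two
  exact ⟨K, fun i => (hB ⟨i, rfl⟩).trans_lt hK⟩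

theorem le_two_pow_ceil_logb {x : ℝ} (hx : 0 < x) : x ≤ 2 ^ ⌈Real.logb 2 x⌉₊ := by
  have := (Real.logb_le_iff_le_rpow one_lt_two hx).1 (Nat.le_ceil _)
  rwa [Real.rpow_natCast] at this

theorem two_zpow_succ_sub_one (n : ℕ) : (2 : ℝ) ^ (((n + 1 : ℕ) : ℤ) - 1) = 2 ^ n := by
  rw [Nat.cast_succ, add_sub_cancel_right, zpow_natCast]

theorem two_zpow_succ_sub_two (n : ℕ) : (2 : ℝ) ^ (((n + 1 : ℕ) : ℤ) - 2) = 2 ^ n / 2 := by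
  rw [show ((n + 1 : ℕ) : ℤ) - 2 = n - 1 by push_cast; ring, zpow_sub_one₀ two_ne_zero,
    zpow_natCast, div_eq_mul_inv]

section DyadicBlocks

variable {r : α} {δ : ℝ} {M m : ℕ} {g : ℕ → List α}
  (hg_head : ∀ k, (g k).head? = some r)
  (hg_dist : ∀ k, ∀ u ∈ (g k).tail, c r u < 2 ^ (m + k * M + 1))
  (hg_regret : ∀ k, pathRegret c r (g k) ≤ δ * 2 ^ (m + k * M) / 2)
include hg_head hg_dist

theorem dist_lt_of_mem_block (hrefl : ∀ u, c u u = 0) {k : ℕ} {u : α} (hu : u ∈ g k) :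
    c r u < 2 ^ (m + k * M + 1) := by
  rw [List.eq_cons_of_mem_head? (hg_head k)] at hu
  rcases List.mem_cons.1 hu with rfl | hu
  · rw [hrefl]
    positivity
  · exact hg_dist k u hu

include hg_regret

theorem sum_tourCost_le (hsymm : ∀ u v, c u v = c v u) (hrefl : ∀ u, c u u = 0) (hδ : 0 < δ)
    (hM : 8 / δ + 2 ≤ 2 ^ M) (n : ℕ) :
    ∑ k ∈ Finset.range n, tourCost c r (g k) ≤ δ / 2 * 2 ^ (m + n * M) := by
  have htour : ∀ k, tourCost c r (g k) ≤ (4 + δ / 2) * 2 ^ (m + k * M) := fun k => by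
    have := tourCost_le_pathRegret_add c hsymm
      (List.ne_nil_of_mem (List.mem_of_mem_head? (hg_head k)))
      fun u hu => (dist_lt_of_mem_block c hg_head hg_dist hrefl hu).le
    rw [pow_succ] at this
    linarith [hg_regret k]
  have hcoef : 4 + δ / 2 ≤ δ / 2 * (2 ^ M - 1) := by
    have : δ / 2 * (8 / δ) = 4 := by field_simp; norm_num
    nlinarith
  have hsum_nonneg : 0 ≤ ∑ k ∈ Finset.range n, (2 : ℝ) ^ (m + k * M) := by positivity
  calc ∑ k ∈ Finset.range n, tourCost c r (g k)
      ≤ (4 + δ / 2) * ∑ k ∈ Finset.range n, (2 : ℝ) ^ (m + k * M) := by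
        rw [Finset.mul_sum]
        exact Finset.sum_le_sum fun k _ => htour k
    _ ≤ δ / 2 * ((∑ k ∈ Finset.range n, (2 : ℝ) ^ (m + k * M)) * (2 ^ M - 1)) := by
        nlinarith
    _ ≤ δ / 2 * 2 ^ (m + n * M) := by
        gcongr
        exact sum_pow_add_mul_mul_sub_one_le zero_le_two m M n

theorem mem_flatMap_range_and_prefixCost_le [DecidableEq α] (hsymm : ∀ u v, c u v = c v u)
    (htri : ∀ u v w, c u v ≤ c u w + c w v) (hrefl : ∀ u, c u u = 0) (hδ : 0 < δ)
    (hM : 8 / δ + 2 ≤ 2 ^ M) (hM₀ : 0 < M) {v : α} {k₀ K : ℕ} (hv : v ∈ g k₀)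
    (hv_low : 2 ^ (m + k₀ * M) ≤ c r v) (hv_high : c r v < 2 ^ K) :
    v ∈ (List.range K).flatMap g ∧
      prefixCost c ((List.range K).flatMap g) v ≤ (1 + δ) * c r v := by
  have hfirst : ∀ k < k₀, v ∉ g k := fun k hk hvk => by
    have hlt := dist_lt_of_mem_block c hg_head hg_dist hrefl hvk
    have : (2 : ℝ) ^ (m + k * M + 1) ≤ 2 ^ (m + k₀ * M) :=
      pow_le_pow_right₀ one_le_two (by nlinarith)
    linarith
  have hk₀ : k₀ < K := by
    have := (pow_lt_pow_iff_right₀ one_lt_two).1 (hv_low.trans_lt hv_high)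
    nlinarith
  refine ⟨List.mem_flatMap.2 ⟨k₀, List.mem_range.2 hk₀, hv⟩, ?_⟩
  rw [prefixCost_flatMap_range c hrefl hg_head hk₀ hv hfirst]
  have := sum_tourCost_le c hg_head hg_dist hg_regret hsymm hrefl hδ hM k₀
  have := prefixCost_le_add_pathRegret c (r := r) htri hrefl hv
  nlinarith [hg_regret k₀]

end DyadicBlocks

end RootedWalks

theorem multiplicative_regret_concatenation_general {α : Type*} [Fintype α] [DecidableEq α]
    (c : α → α → ℝ) (r : α)
    (hsymm : ∀ u v, c u v = c v u)
    (htri : ∀ u v w, c u v ≤ c u w + c w v) (hrefl : ∀ u, c u u = 0)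
    (δ : ℝ) (hδ : 0 < δ)
    (hD : ∀ v, v ≠ r → 1 ≤ c r v)
    (N : ℕ)
    (P : ℕ → Fin N → List α)
    (hpath : ∀ i : ℕ, 1 ≤ i → ∀ j, IsRootedPath r (P i j) ∧
      (∀ v ∈ (P i j).tail, (2:ℝ)^((i:ℤ)-1) ≤ c r v ∧ c r v < (2:ℝ)^(i:ℤ)) ∧
      pathRegret c r (P i j) ≤ δ * (2:ℝ)^((i:ℤ)-2))
    (hcov : ∀ i : ℕ, 1 ≤ i → ∀ v, v ≠ r →
      (2:ℝ)^((i:ℤ)-1) ≤ c r v → c r v < (2:ℝ)^(i:ℤ) → ∃ j, v ∈ (P i j).tail) :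
    ∃ (n : ℕ) (W : Fin n → List α),
      n ≤ ⌈Real.logb 2 (3 + 8/δ)⌉₊ * N ∧
      (∀ j, (W j).head? = some r) ∧
      (∀ v, v ≠ r → ∃ j, v ∈ (W j) ∧ prefixCost c (W j) v ≤ (1 + δ) * c r v) := by
  set M := ⌈Real.logb 2 (3 + 8 / δ)⌉₊
  have hM : 8 / δ + 2 ≤ (2 : ℝ) ^ M := by
    have := le_two_pow_ceil_logb (show 0 < 3 + 8 / δ by positivity)
    linarith
  have hM₀ : 0 < M := Nat.pos_of_ne_zero fun h => by
    rw [h, pow_zero] at hM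
    linarith [show 0 < 8 / δ by positivity]
  obtain ⟨K, hK⟩ := exists_forall_lt_two_pow (c r)
  have hclass : ∀ n j, (P (n + 1) j).head? = some r ∧
      (∀ u ∈ (P (n + 1) j).tail, c r u < 2 ^ (n + 1)) ∧
      pathRegret c r (P (n + 1) j) ≤ δ * 2 ^ n / 2 := fun n j => by
    obtain ⟨⟨hhead, -⟩, hdist, hregret⟩ := hpath (n + 1) n.succ_pos j
    refine ⟨hhead, fun u hu => ?_, ?_⟩
    · rw [← zpow_natCast]
      exact (hdist u hu).2
    · rwa [two_zpow_succ_sub_two, mul_div_assoc'] at hregret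
  let walk : Fin M × Fin N → List α := fun mj =>
    (List.range (K + 1)).flatMap fun k => P (mj.1 + k * M + 1) mj.2
  refine ⟨M * N, walk ∘ finProdFinEquiv.symm, le_rfl, fun q => ?_, fun v hv => ?_⟩
  · simp [walk, List.range_succ_eq_map, (hclass _ _).1]
  obtain ⟨n, hn_low, hn_high⟩ := exists_nat_pow_near (hD v hv) one_lt_two
  obtain ⟨j, hj⟩ := hcov (n + 1) n.succ_pos v hv (by rwa [two_zpow_succ_sub_one])
    (by rwa [zpow_natCast])
  have hn : n % M + n / M * M = n := Nat.mod_add_div' n M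
  refine ⟨finProdFinEquiv (⟨n % M, Nat.mod_lt n hM₀⟩, j), ?_⟩
  simp only [Function.comp_apply, Equiv.symm_apply_apply, walk]
  exact mem_flatMap_range_and_prefixCost_le c (fun _ => (hclass _ j).1)
    (fun _ => (hclass _ j).2.1) (fun _ => (hclass _ j).2.2) hsymm htri hrefl hδ hM hM₀
    (by rw [hn]; exact List.mem_of_mem_tail hj) (by rwa [hn])
    ((hK v).trans (pow_lt_pow_right₀ one_lt_two K.lt_succ_self))

/-- let `δ > 0`, `R = 1 + δ`, `D_v ≥ 1` for all `v ∈ V`, and for `i ≥ 1` let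
`V_i = {v : 2^{i−1} ≤ D_v < 2^i}`.  Suppose for every `i ≥ 1` there are `N` rooted paths
(possibly trivial), with non-root nodes in `V_i`, covering `V_i`, each of regret at most
`δ·2^{i−2}`.  With `M = ⌈log₂(3 + 8/δ)⌉`, there exist at most `M·N` walks starting at `r`
covering `V` such that every `v ∈ V` is first reached at travel time at most `R·D_v` along
the walk covering it. -/
theorem multiplicative_regret_concatenation {α : Type*} [Fintype α] [DecidableEq α]
    (c : α → α → ℝ) (r : α)
    (hsymm : ∀ u v, c u v = c v u) (hnn : ∀ u v, 0 ≤ c u v)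
    (htri : ∀ u v w, c u v ≤ c u w + c w v) (hrefl : ∀ u, c u u = 0)
    (hpos : ∀ u v, u ≠ v → 0 < c u v)
    (δ : ℝ) (hδ : 0 < δ)
    (hD : ∀ v, v ≠ r → 1 ≤ c r v)
    (N : ℕ) (hN : 1 ≤ N)
    (P : ℕ → Fin N → List α)
    (hpath : ∀ i : ℕ, 1 ≤ i → ∀ j, IsRootedPath r (P i j) ∧
      (∀ v ∈ (P i j).tail, (2:ℝ)^((i:ℤ)-1) ≤ c r v ∧ c r v < (2:ℝ)^(i:ℤ)) ∧
      pathRegret c r (P i j) ≤ δ * (2:ℝ)^((i:ℤ)-2))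
    (hcov : ∀ i : ℕ, 1 ≤ i → ∀ v, v ≠ r →
      (2:ℝ)^((i:ℤ)-1) ≤ c r v → c r v < (2:ℝ)^(i:ℤ) → ∃ j, v ∈ (P i j).tail) :
    ∃ (n : ℕ) (W : Fin n → List α),
      n ≤ ⌈Real.logb 2 (3 + 8/δ)⌉₊ * N ∧
      (∀ j, (W j).head? = some r) ∧
      (∀ v, v ≠ r → ∃ j, v ∈ (W j) ∧ prefixCost c (W j) v ≤ (1 + δ) * c r v) :=
  multiplicative_regret_concatenation_general c r hsymm htri hrefl δ hδ hD N P hpath hcov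
end

section
/- Let a_0 > a_1 > … > a_k > 0 be integers with a_0 ≥ 2 such that 2^(a_{i+1} − a_i) < (log₂ a_{i+1}) / a_{i+1} for all i = 0, …, k−1. Then k ≤ 16 + 9·a_0 / log₂ a_0; in particular k = O(a_0 / log a_0). -/
/-!
Taking `log₂` of the hypothesis gives `a_i - a_{i+1} > log₂ a_{i+1} - log₂ log₂ a_{i+1}
≥ (1/3) log₂ a_{i+1}`. So while the sequence stays above `√a_0` every step drops it by at least
`(1/6) log₂ a_0`, which allows at most `6 a_0 / log₂ a_0` steps; once below `√a_0`, strict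
monotonicity allows fewer than `√a_0 ≤ (4/3) a_0 / log₂ a_0` further steps.
-/

open Real

lemma Real.logb_two_le {y : ℝ} (hy : 0 < y) : logb 2 y ≤ 2 / 3 * y := by
  have hlog : log y ≤ y / exp 1 := by
    rw [le_div_iff₀ (exp_pos 1), mul_comm]
    simpa [exp_log hy] using exp_one_mul_le_exp (x := log y)
  have h2e : 3 / 2 ≤ log 2 * exp 1 := by
    nlinarith [exp_one_gt_d9, log_two_gt_d9]
  rw [logb, div_le_iff₀ (by positivity)]
  calc log y ≤ y / exp 1 := hlog
    _ ≤ 2 / 3 * y * log 2 := by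
      rw [div_le_iff₀ (exp_pos 1)]
      nlinarith

lemma Real.logb_sqrt {b x : ℝ} (hx : 0 ≤ x) : logb b √x = logb b x / 2 := by
  rw [logb, logb, log_sqrt hx, div_right_comm]

lemma Real.logb_two_le_sqrt {x : ℝ} (hx : 0 ≤ x) : logb 2 x ≤ 4 / 3 * √x := by
  rcases hx.eq_or_lt with rfl | hx
  · simp
  linarith [logb_two_le (sqrt_pos.mpr hx), logb_sqrt (b := 2) hx.le]

lemma logb_two_div_three_lt_sub {m d : ℝ} (hm : 1 < m)
    (h : (2 : ℝ) ^ (m - d) < logb 2 m / m) : logb 2 m / 3 < d - m := by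
  have hL : 0 < logb 2 m := logb_pos one_lt_two hm
  have hlog := logb_lt_logb one_lt_two (by positivity) h
  rw [logb_rpow two_pos (by norm_num), logb_div hL.ne' (by positivity)] at hlog
  linarith [logb_two_le hL]

lemma apply_add_le_apply_zero {a : ℕ → ℕ} {k : ℕ} (hdec : ∀ i < k, a (i + 1) < a i) :
    a k + k ≤ a 0 := by
  induction k with
  | zero => simp
  | succ k ih =>
    have := ih fun i hi => hdec i (by omega)
    have := hdec k (by omega)
    omega

lemma length_le_div_add_of_drop_ge {a : ℕ → ℕ} {k : ℕ} {T g : ℝ} (hg : 0 < g) (hT : 0 ≤ T)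
    (hdec : ∀ i < k, a (i + 1) < a i) (hpos : 0 < a k)
    (hdrop : ∀ i < k, T ≤ a (i + 1) → g ≤ (a i : ℝ) - a (i + 1)) :
    (k : ℝ) ≤ a 0 / g + T := by
  induction k generalizing a with
  | zero => push_cast; positivity
  | succ k ih =>
    have hdec' : ∀ i < k, a (i + 1 + 1) < a (i + 1) := fun i hi => hdec (i + 1) (by omega)
    by_cases hT1 : T ≤ a 1
    · have hk := ih (a := fun i => a (i + 1)) hdec' hpos
        fun i hi => hdrop (i + 1) (by omega)
      have hstep : (a 1 : ℝ) / g + 1 ≤ a 0 / g := by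
        rw [div_add_one hg.ne', div_le_div_iff_of_pos_right hg]
        linarith [hdrop 0 (by omega) hT1]
      push_cast
      linarith
    · have hk : k + 1 ≤ a 1 := by
        have : a (k + 1) + k ≤ a 1 := apply_add_le_apply_zero (a := fun i => a (i + 1)) hdec'
        omega
      have hk' : ((k + 1 : ℕ) : ℝ) ≤ a 1 := by exact_mod_cast hk
      have hquot : 0 ≤ (a 0 : ℝ) / g := by positivity
      linarith

/-- let `a_0 > a_1 > … > a_k > 0` be integers with `a_0 ≥ 2` such that
`2^(a_{i+1} − a_i) < (log₂ a_{i+1}) / a_{i+1}` for all `i < k` (real exponentiation).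
Then `k ≤ 16 + 9·a_0 / log₂ a_0`. -/
theorem sequence_length_bound (k : ℕ) (a : ℕ → ℕ)
    (ha0 : 2 ≤ a 0)
    (hdec : ∀ i < k, a (i + 1) < a i)
    (hpos : 0 < a k)
    (hcond : ∀ i < k,
      (2:ℝ) ^ ((a (i + 1) : ℝ) - (a i : ℝ))
        < Real.logb 2 (a (i + 1)) / (a (i + 1) : ℝ)) :
    (k : ℝ) ≤ 16 + 9 * (a 0 : ℝ) / Real.logb 2 (a 0) := by
  set A : ℝ := (a 0 : ℝ)
  set L := logb 2 A
  have hA : 2 ≤ A := Nat.ofNat_le_cast.mpr ha0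
  have hL : 0 < L := logb_pos one_lt_two (by linarith)
  have hdrop : ∀ i < k, √A ≤ a (i + 1) → L / 6 ≤ (a i : ℝ) - a (i + 1) := by
    intro i hi hle
    have h1 : 1 < (a (i + 1) : ℝ) := lt_of_lt_of_le (by rw [lt_sqrt zero_le_one]; linarith) hle
    have h2 : L / 2 ≤ logb 2 (a (i + 1)) :=
      logb_sqrt (b := 2) (x := A) (by linarith) ▸
        logb_le_logb_of_le one_lt_two (sqrt_pos.mpr (by linarith)) hle
    linarith [logb_two_div_three_lt_sub h1 (hcond i hi)]
  have hk := length_le_div_add_of_drop_ge (by positivity) (sqrt_nonneg A) hdec hpos hdrop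
  have hsqrt : √A ≤ 4 / 3 * (A / L) := by
    rw [← mul_div_assoc, le_div_iff₀ hL]
    nlinarith [logb_two_le_sqrt (x := A) (by linarith), mul_self_sqrt (show 0 ≤ A by linarith),
      sqrt_nonneg A]
  have hAL : 0 ≤ A / L := by positivity
  calc (k : ℝ) ≤ A / (L / 6) + √A := hk
    _ = 6 * (A / L) + √A := by ring
    _ ≤ 16 + 9 * A / L := by rw [mul_div_assoc]; linarith
end

section
/- For all integers h ≥ 1 and c ≥ 1, let k = c·(2h−1) and consider the RVRP instance given by the shortest-path metric of the graph consisting of c·h disjoint copies of the ladder graph L_h, all sharing the common root r. Then: (a) there is a feasible fractional solution x to the configuration LP (P) with regret bound R = 1 (i.e., Σ_{P ∈ C_1 : v ∈ P} x_P ≥ 1 for every non-root node v) of value Σ_P x_P ≤ k; and (b) every collection of rooted paths, each of regret strictly less than 2h−1, whose union covers all non-root nodes, contains at least k + c = 2ch paths. -/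
/-- Extended-real cost of a walk, given edge weights `g` (with `⊤` for non-edges). -/
noncomputable def walkCostE {β : Type*} (g : β → β → ENNReal) : List β → ENNReal
  | [] => 0
  | [_] => 0
  | a :: b :: l => g a b + walkCostE g (b :: l)

/-- Shortest-path distance induced by edge weights `g`. -/
noncomputable def spDist {β : Type*} (g : β → β → ENNReal) (u v : β) : ℝ :=
  (⨅ l ∈ {l : List β | l.head? = some u ∧ l.getLast? = some v}, walkCostE g l).toReal

/-- Nodes of `copies` disjoint copies of the ladder graph `L_h` sharing a common root:
`Sum.inl ()` is the root `r`; `Sum.inr (j, i, b)` is `u_{i+1}` (if `b = true`) or `v_{i+1}`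
(if `b = false`) of copy `j`. -/
abbrev LadderNode (h copies : ℕ) := Unit ⊕ (Fin copies × Fin (2 * h - 1) × Bool)

/-- Edge weights of `copies` disjoint copies of the ladder graph `L_h` sharing the root:
"vertical" edges `(u_i,u_{i+1})`, `(v_i,v_{i+1})` (within one copy, with `u_0 = v_0 = r`)
cost `h`, "rung" edges `(u_i,v_i)` cost `1`, everything else is a non-edge (`⊤`). -/
noncomputable def ladderEdges (h copies : ℕ) :
    LadderNode h copies → LadderNode h copies → ENNReal
  | Sum.inl _, Sum.inl _ => ⊤
  | Sum.inl _, Sum.inr (_, i, _) => if (i : ℕ) = 0 then (h : ENNReal) else ⊤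
  | Sum.inr (_, i, _), Sum.inl _ => if (i : ℕ) = 0 then (h : ENNReal) else ⊤
  | Sum.inr (j, i, b), Sum.inr (j', i', b') =>
      if j = j' ∧ b = b' ∧ ((i : ℕ) + 1 = (i' : ℕ) ∨ (i' : ℕ) + 1 = (i : ℕ)) then (h : ENNReal)
      else if j = j' ∧ i = i' ∧ b ≠ b' then 1 else ⊤

/-- The shortest-path metric of `copies` disjoint copies of `L_h` sharing the root. -/
noncomputable def ladderMetric (h copies : ℕ) :
    LadderNode h copies → LadderNode h copies → ℝ :=
  spDist (ladderEdges h copies)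

/-- Decidability of list membership from decidable equality (helper instance). -/
instance listDecidableMem {γ : Type*} [DecidableEq γ] (v : γ) (l : List γ) :
    Decidable (v ∈ l) :=
  List.rec (.isFalse (by simp))
    (fun a l ih => decidable_of_iff (v = a ∨ v ∈ l) (by simp [eq_comm])) l

section PathCost

variable {α : Type*} (c : α → α → ℝ)

theorem sub_le_pathCost {φ : α → ℝ} (hφ : ∀ x y, φ y - φ x ≤ c x y) :
    ∀ (a : α) (t : List α), φ (t.getLastD a) - φ a ≤ pathCost c (a :: t)
  | a, [] => by simp [pathCost]
  | a, b :: t => by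
    have := sub_le_pathCost hφ b t
    simp only [pathCost, List.getLastD_cons] at this ⊢
    linarith [hφ a b]

theorem sub_add_sub_le_pathCost {φ ψ : α → ℝ} (hφ : ∀ x y, φ y - φ x ≤ c x y)
    (hψ : ∀ x y, ψ y - ψ x ≤ c x y) (a : α) (t : List α) {z : α} (hz : z ∈ a :: t) :
    φ z - φ a + (ψ (t.getLastD a) - ψ z) ≤ pathCost c (a :: t) := by
  induction t generalizing a with
  | nil => simp_all [pathCost]
  | cons b t ih =>
    rcases List.mem_cons.mp hz with rfl | hz
    · simpa using sub_le_pathCost c hψ z (b :: t)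
    · have := ih b hz
      simp only [pathCost, List.getLastD_cons] at this ⊢
      linarith [hφ a b]

theorem sub_add_length_le_pathCost {f : α → ℝ} (hf : ∀ x y, x ≠ y → f y - f x + 1 ≤ c x y) :
    ∀ (a : α) (t : List α), (a :: t).Nodup →
      f (t.getLastD a) - f a + t.length ≤ pathCost c (a :: t)
  | a, [] => by simp [pathCost]
  | a, b :: t => fun hnd => by
    have hab : a ≠ b := fun e => (List.nodup_cons.mp hnd).1 (e ▸ List.mem_cons_self)
    have := sub_add_length_le_pathCost hf b t (List.nodup_cons.mp hnd).2
    simp only [pathCost, List.getLastD_cons, List.length_cons] at this ⊢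
    push_cast
    linarith [hf a b hab]

theorem pathCost_le_of_isChain {φ : α → ℝ} :
    ∀ (a : α) (t : List α), (a :: t).IsChain (fun x y => c x y ≤ φ y - φ x) →
      pathCost c (a :: t) ≤ φ (t.getLastD a) - φ a
  | a, [] => by simp [pathCost]
  | a, b :: t => fun hch => by
    rw [List.isChain_cons_cons] at hch
    have := pathCost_le_of_isChain b t hch.2
    simp only [pathCost, List.getLastD_cons] at this ⊢
    linarith [hch.1]

end PathCost

section ShortestPath

variable {β : Type*} (g : β → β → ENNReal)

/-- `spDist g u v = (spDistE g u v).toReal`, which is the junk value `0` when `v` cannot be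
reached from `u`. -/
noncomputable def spDistE (u v : β) : ENNReal :=
  ⨅ l ∈ {l : List β | l.head? = some u ∧ l.getLast? = some v}, walkCostE g l

theorem spDistE_le_walkCostE {u v : β} {l : List β} (hu : l.head? = some u)
    (hv : l.getLast? = some v) : spDistE g u v ≤ walkCostE g l :=
  iInf₂_le l ⟨hu, hv⟩

theorem spDistE_self (u : β) : spDistE g u u = 0 :=
  nonpos_iff_eq_zero.mp (spDistE_le_walkCostE g (l := [u]) rfl rfl)

theorem spDistE_le_edge (u v : β) : spDistE g u v ≤ g u v := by
  simpa [walkCostE] using spDistE_le_walkCostE g (l := [u, v]) rfl rfl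

theorem walkCostE_append_cons (l : List β) (x : β) (t : List β) :
    walkCostE g (l ++ x :: t) = walkCostE g (l ++ [x]) + walkCostE g (x :: t) := by
  induction l with
  | nil => simp [walkCostE]
  | cons a l ih =>
    cases l with
    | nil => simp [walkCostE]
    | cons b l =>
      simp only [List.cons_append, walkCostE] at ih ⊢
      rw [ih, add_assoc]

theorem spDistE_triangle (u v w : β) : spDistE g u w ≤ spDistE g u v + spDistE g v w := by
  refine ENNReal.le_iInf₂_add_iInf₂ fun l₁ h₁ l₂ h₂ => ?_
  obtain ⟨l, rfl⟩ := List.getLast?_eq_some_iff.mp h₁.2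
  obtain ⟨t, rfl⟩ := List.head?_eq_some_iff.mp h₂.1
  rw [← walkCostE_append_cons]
  refine spDistE_le_walkCostE g ?_ ?_
  · cases l <;> simp_all
  · simpa using h₂.2

theorem ofReal_sub_le_spDistE {φ : β → ℝ} (hφ : ∀ x y, ENNReal.ofReal (φ y - φ x) ≤ g x y)
    (u v : β) : ENNReal.ofReal (φ v - φ u) ≤ spDistE g u v := by
  refine le_iInf₂ fun l hl => ?_
  induction l generalizing u with
  | nil => simp at hl
  | cons a l ih =>
    obtain ⟨rfl, hv⟩ : a = u ∧ (a :: l).getLast? = some v := by simpa using hl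
    cases l with
    | nil => simp_all
    | cons b l =>
      calc ENNReal.ofReal (φ v - φ a)
          ≤ ENNReal.ofReal (φ b - φ a) + ENNReal.ofReal (φ v - φ b) := by
            rw [← sub_add_sub_cancel (φ v) (φ b) (φ a), add_comm]
            exact ENNReal.ofReal_add_le
        _ ≤ g a b + walkCostE g (b :: l) := add_le_add (hφ a b) (ih b ⟨rfl, by simpa using hv⟩)
        _ = walkCostE g (a :: b :: l) := rfl

theorem sub_le_spDist {φ : β → ℝ} (hφ : ∀ x y, ENNReal.ofReal (φ y - φ x) ≤ g x y)
    {u v : β} (hfin : spDistE g u v ≠ ⊤) : φ v - φ u ≤ spDist g u v :=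
  (ENNReal.ofReal_le_iff_le_toReal hfin).mp (ofReal_sub_le_spDistE g hφ u v)

theorem spDist_le_toReal_edge {u v : β} (huv : g u v ≠ ⊤) : spDist g u v ≤ (g u v).toReal :=
  ENNReal.toReal_mono huv (spDistE_le_edge g u v)

theorem one_le_spDist (hg : ∀ x y, 1 ≤ g x y) {u v : β} (huv : u ≠ v) (hfin : spDistE g u v ≠ ⊤) :
    1 ≤ spDist g u v := by
  classical
  have hφ : ∀ x y, ENNReal.ofReal ((if y = u then 0 else 1) - (if x = u then 0 else 1)) ≤ g x y :=
    fun x y => le_trans (ENNReal.ofReal_le_one.mpr (by split_ifs <;> norm_num)) (hg x y)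
  simpa [huv.symm] using sub_le_spDist g hφ hfin

end ShortestPath

theorem IsRootedPath.eq_cons {α : Type*} {r : α} {w : List α} (hw : IsRootedPath r w) :
    w = r :: w.tail := by
  obtain ⟨t, rfl⟩ := List.head?_eq_some_iff.mp hw.1
  rfl

namespace Ladder

variable {h C : ℕ}

def level : LadderNode h C → ℕ
  | .inl _ => 0
  | .inr (_, i, _) => i + 1

theorem level_le (z : LadderNode h C) : level z ≤ 2 * h - 1 := by
  rcases z with _ | ⟨j, i, b⟩
  · exact Nat.zero_le _
  · exact i.isLt

def copyOf : LadderNode h C → Option (Fin C)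
  | .inl _ => none
  | .inr (j, _, _) => some j

@[simp] theorem copyOf_inr (j : Fin C) (i : Fin (2 * h - 1)) (b : Bool) :
    copyOf (.inr (j, i, b) : LadderNode h C) = some j := rfl

-- 1-Lipschitz because the copies meet only at the root, where it vanishes.
noncomputable def copyPotential (j : Fin C) (z : LadderNode h C) : ℝ :=
  if copyOf z = some j then -(h * level z : ℝ) else h * level z

theorem ladderEdges_cases (x y : LadderNode h C) :
    ladderEdges h C x y = ⊤ ∨
    ladderEdges h C x y = h ∧ (level y = level x + 1 ∨ level x = level y + 1) ∧
      (copyOf x = copyOf y ∨ level x = 0 ∨ level y = 0) ∨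
    ladderEdges h C x y = 1 ∧ level x = level y ∧ copyOf x = copyOf y := by
  rcases x with _ | ⟨j, i, b⟩ <;> rcases y with _ | ⟨j', i', b'⟩ <;>
    simp only [ladderEdges, level, copyOf] <;> (try split_ifs) <;> simp_all
  omega

theorem one_le_ladderEdges (x y : LadderNode h C) : 1 ≤ ladderEdges h C x y := by
  rcases x with _ | ⟨j, i, b⟩ <;> rcases y with _ | ⟨j', i', b'⟩ <;>
    simp only [ladderEdges] <;> (try split_ifs) <;> simp <;> omega

theorem ofReal_level_sub_le_ladderEdges (x y : LadderNode h C) :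
    ENNReal.ofReal (h * level y - h * level x) ≤ ladderEdges h C x y := by
  rcases ladderEdges_cases x y with htop | ⟨hxy, hlev, -⟩ | ⟨hxy, hlev, -⟩
  · simp [htop]
  · rw [hxy]
    apply ENNReal.ofReal_le_of_le_toReal
    rcases hlev with hlev | hlev <;> simp [hlev] <;> nlinarith
  · simp [hxy, hlev]

theorem ofReal_copyPotential_sub_le_ladderEdges (j : Fin C) (x y : LadderNode h C) :
    ENNReal.ofReal (copyPotential j y - copyPotential j x) ≤ ladderEdges h C x y := by
  rcases ladderEdges_cases x y with htop | ⟨hxy, hlev, hcopy⟩ | ⟨hxy, hlev, hcopy⟩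
  · simp [htop]
  · rw [hxy]
    apply ENNReal.ofReal_le_of_le_toReal
    simp only [copyPotential, ENNReal.toReal_natCast]
    rcases hcopy with hcopy | hcopy | hcopy <;> rcases hlev with hlev | hlev <;>
      simp only [hcopy, hlev] <;> split_ifs <;> push_cast <;> nlinarith
  · simp [copyPotential, hxy, hlev, hcopy]

theorem spDistE_root_le_and_le_root (z : LadderNode h C) :
    spDistE (ladderEdges h C) (.inl ()) z ≤ ((h * level z : ℕ) : ENNReal) ∧
      spDistE (ladderEdges h C) z (.inl ()) ≤ ((h * level z : ℕ) : ENNReal) := by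
  rcases z with _ | ⟨j, ⟨k, hk⟩, b⟩
  · simp [spDistE_self]
  induction k with
  | zero => simpa [level] using ⟨spDistE_le_edge _ _ _, spDistE_le_edge _ _ _⟩
  | succ k ih =>
    obtain ⟨ih₁, ih₂⟩ := ih (by omega)
    set x : LadderNode h C := .inr (j, ⟨k, by omega⟩, b)
    have hup : ladderEdges h C x (.inr (j, ⟨k + 1, hk⟩, b)) = h := by simp [x, ladderEdges]
    have hdown : ladderEdges h C (.inr (j, ⟨k + 1, hk⟩, b)) x = h := by simp [x, ladderEdges]
    simp only [level] at ih₁ ih₂ ⊢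
    rw [show h * (k + 1 + 1) = h * (k + 1) + h by ring, Nat.cast_add]
    constructor
    · calc _ ≤ spDistE _ (.inl ()) x + spDistE _ x _ := spDistE_triangle _ _ x _
        _ ≤ _ := add_le_add ih₁ ((spDistE_le_edge _ _ _).trans_eq hup)
    · calc _ ≤ spDistE _ _ x + spDistE _ x (.inl ()) := spDistE_triangle _ _ x _
        _ ≤ h + _ := add_le_add ((spDistE_le_edge _ _ _).trans_eq hdown) ih₂
        _ = _ := add_comm _ _

theorem spDistE_ladderEdges_ne_top (x y : LadderNode h C) : spDistE (ladderEdges h C) x y ≠ ⊤ :=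
  ne_top_of_le_ne_top (ENNReal.add_ne_top.mpr ⟨ENNReal.natCast_ne_top _, ENNReal.natCast_ne_top _⟩)
    ((spDistE_triangle _ x (.inl ()) y).trans
      (add_le_add (spDistE_root_le_and_le_root x).2 (spDistE_root_le_and_le_root y).1))

theorem level_sub_le_ladderMetric (x y : LadderNode h C) :
    h * level y - h * level x ≤ ladderMetric h C x y :=
  sub_le_spDist _ ofReal_level_sub_le_ladderEdges (spDistE_ladderEdges_ne_top x y)

theorem copyPotential_sub_le_ladderMetric (j : Fin C) (x y : LadderNode h C) :
    copyPotential j y - copyPotential j x ≤ ladderMetric h C x y :=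
  sub_le_spDist _ (ofReal_copyPotential_sub_le_ladderEdges j) (spDistE_ladderEdges_ne_top x y)

theorem one_le_ladderMetric {x y : LadderNode h C} (hxy : x ≠ y) : 1 ≤ ladderMetric h C x y :=
  one_le_spDist _ one_le_ladderEdges hxy (spDistE_ladderEdges_ne_top x y)

theorem ladderMetric_root (z : LadderNode h C) : ladderMetric h C (.inl ()) z = h * level z := by
  refine le_antisymm ?_ (by simpa [level] using level_sub_le_ladderMetric (.inl ()) z)
  exact_mod_cast ENNReal.toReal_le_of_le_ofReal (by positivity)
    ((spDistE_root_le_and_le_root z).1.trans_eq (ENNReal.ofReal_natCast _).symm)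

theorem ladderMetric_le_of_ladderEdges_eq {x y : LadderNode h C} {a : ℕ}
    (hxy : ladderEdges h C x y = a) : ladderMetric h C x y ≤ a := by
  have := spDist_le_toReal_edge _ (hxy ▸ ENNReal.natCast_ne_top a)
  rwa [hxy, ENNReal.toReal_natCast] at this

/-- The node at height `t + 1` on side `b` of copy `j`; the junk value `inl ()` if `t` is out
of range. -/
def nodeAt (j : Fin C) (b : Bool) (t : ℕ) : LadderNode h C :=
  if ht : t < 2 * h - 1 then .inr (j, ⟨t, ht⟩, b) else .inl ()

theorem nodeAt_of_lt (j : Fin C) (b : Bool) {t : ℕ} (ht : t < 2 * h - 1) :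
    (nodeAt j b t : LadderNode h C) = .inr (j, ⟨t, ht⟩, b) :=
  dif_pos ht

/-- Up side `s` to height `i + 1`, across that rung, then up side `!s` to the top. -/
def climbPath (j : Fin C) (i : ℕ) (s : Bool) : List (LadderNode h C) :=
  .inl () :: (List.range (2 * h)).map fun k =>
    if k ≤ i then nodeAt j s k else nodeAt j (!s) (k - 1)

noncomputable def climbPotential (s : Bool) : LadderNode h C → ℝ
  | .inl _ => 0
  | .inr (_, i, b) => h * (i + 1 : ℝ) + if b = s then 0 else 1

def IsClimbStep (s : Bool) (x y : LadderNode h C) : Prop :=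
  ladderMetric h C x y ≤ climbPotential s y - climbPotential s x ∧
    climbPotential s x < climbPotential s y

theorem isClimbStep_root {j : Fin C} {s : Bool} (h₀ : 0 < 2 * h - 1) :
    IsClimbStep s (.inl ()) (.inr (j, ⟨0, h₀⟩, s) : LadderNode h C) := by
  have := ladderMetric_le_of_ladderEdges_eq (a := h) (x := .inl ()) (y := .inr (j, ⟨0, h₀⟩, s))
    (by simp [ladderEdges])
  refine ⟨by simpa [climbPotential] using this, ?_⟩
  simp only [climbPotential]
  have : 0 < h := by omega
  positivity

theorem isClimbStep_up {j : Fin C} {s b : Bool} {t t' : Fin (2 * h - 1)}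
    (htt : (t : ℕ) + 1 = t') :
    IsClimbStep s (.inr (j, t, b)) (.inr (j, t', b) : LadderNode h C) := by
  have hh : (1 : ℝ) ≤ h := by exact_mod_cast (show 1 ≤ h by omega)
  have := ladderMetric_le_of_ladderEdges_eq (a := h) (x := .inr (j, t, b)) (y := .inr (j, t', b))
    (by simp [ladderEdges, htt])
  have htt' : (t' : ℝ) = t + 1 := by exact_mod_cast htt.symm
  simp only [IsClimbStep, climbPotential, htt']
  constructor <;> linarith

theorem isClimbStep_rung {j : Fin C} {s : Bool} (t : Fin (2 * h - 1)) :
    IsClimbStep s (.inr (j, t, s)) (.inr (j, t, !s) : LadderNode h C) := by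
  have := ladderMetric_le_of_ladderEdges_eq (a := 1) (x := .inr (j, t, s)) (y := .inr (j, t, !s))
    (by simp [ladderEdges])
  refine ⟨by simpa [climbPotential] using this, by simp [climbPotential]⟩

theorem isChain_climbPath (j : Fin C) {i : ℕ} (hi : i < 2 * h - 1) (s : Bool) :
    (climbPath j i s : List (LadderNode h C)).IsChain (IsClimbStep s) := by
  rw [climbPath, List.isChain_cons, List.isChain_map, List.isChain_range]
  refine ⟨?_, fun m hm => ?_⟩
  · intro y hy
    rw [List.head?_map, List.head?_range, if_neg (by omega), Option.map_some,
      Option.mem_def, Option.some_inj] at hy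
    rw [← hy, if_pos (Nat.zero_le _), nodeAt_of_lt _ _ (by omega)]
    exact isClimbStep_root _
  rcases lt_trichotomy m i with hlt | rfl | hgt
  · rw [if_pos hlt.le, if_pos (Nat.succ_le_of_lt hlt), nodeAt_of_lt _ _ (by omega),
      nodeAt_of_lt _ _ (by omega)]
    exact isClimbStep_up rfl
  · rw [if_pos le_rfl, if_neg (by omega), Nat.succ_sub_one, nodeAt_of_lt _ _ (by omega),
      nodeAt_of_lt _ _ (by omega)]
    exact isClimbStep_rung _
  · rw [if_neg (by omega), if_neg (by omega), nodeAt_of_lt _ _ (by omega),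
      nodeAt_of_lt _ _ (by omega)]
    exact isClimbStep_up (by simp only [Nat.succ_sub_one]; omega)

theorem isRootedPath_climbPath (j : Fin C) {i : ℕ} (hi : i < 2 * h - 1) (s : Bool) :
    IsRootedPath (.inl ()) (climbPath j i s : List (LadderNode h C)) := by
  refine ⟨rfl, List.Nodup.of_map (climbPotential s) ?_⟩
  have := (List.isChain_map _).mpr ((isChain_climbPath j hi s).imp fun _ _ hxy => hxy.2)
  exact (List.isChain_iff_pairwise.mp this).nodup

theorem pathRegret_climbPath_le_one (j : Fin C) {i : ℕ} (hi : i < 2 * h - 1) (s : Bool) :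
    pathRegret (ladderMetric h C) (.inl ()) (climbPath j i s : List (LadderNode h C)) ≤ 1 := by
  have hcost := pathCost_le_of_isChain (ladderMetric h C) _ _
    ((isChain_climbPath j hi s).imp fun _ _ hxy => hxy.1)
  have hlast : ((List.range (2 * h)).map fun k =>
      if k ≤ i then nodeAt j s k else nodeAt j (!s) (k - 1)).getLastD (.inl ()) =
      (.inr (j, ⟨2 * h - 2, by omega⟩, !s) : LadderNode h C) := by
    rw [List.getLastD_eq_getLast?, List.getLast?_map, List.getLast?_range, if_neg (by omega),
      Option.map_some, Option.getD_some, if_neg (by omega), nodeAt_of_lt _ _ (by omega)]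
    rfl
  simp only [climbPath, pathRegret, List.getLastD_cons, hlast, ladderMetric_root, level,
    climbPotential, if_neg (Bool.not_ne_self s), Nat.cast_add, Nat.cast_one] at hcost ⊢
  linarith

theorem mem_climbPath_tail {j : Fin C} {i : ℕ} {s b : Bool} {t : Fin (2 * h - 1)}
    (hb : b = s ∧ (t : ℕ) ≤ i ∨ b = !s ∧ i ≤ t) :
    .inr (j, t, b) ∈ (climbPath j i s : List (LadderNode h C)).tail := by
  simp only [climbPath, List.tail_cons, List.mem_map, List.mem_range]
  rcases hb with ⟨rfl, hti⟩ | ⟨rfl, hit⟩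
  · exact ⟨t, by omega, by rw [if_pos hti, nodeAt_of_lt _ _ t.isLt]⟩
  · refine ⟨t + 1, by omega, ?_⟩
    rw [if_neg (by omega), Nat.add_sub_cancel, nodeAt_of_lt _ _ t.isLt]

theorem two_mul_le_card_climbPath_cover (j : Fin C) (t : Fin (2 * h - 1)) (b : Bool) :
    2 * h ≤ (Finset.univ.filter fun p : Fin C × Fin (2 * h - 1) × Bool =>
      .inr (j, t, b) ∈ (climbPath p.1 p.2.1 p.2.2 : List (LadderNode h C)).tail).card := by
  let e (c : Bool) : Fin (2 * h - 1) ↪ Fin C × Fin (2 * h - 1) × Bool :=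
    ⟨fun i => (j, i, c), fun _ _ hi => by simpa using hi⟩
  have hdisj : Disjoint ((Finset.Ici t).map (e b)) ((Finset.Iic t).map (e !b)) := by
    rw [Finset.disjoint_left]
    rintro _ hp hp'
    obtain ⟨i, -, rfl⟩ := Finset.mem_map.mp hp
    obtain ⟨i', -, hi'⟩ := Finset.mem_map.mp hp'
    exact Bool.not_ne_self b (congrArg (·.2.2) hi')
  calc 2 * h = ((Finset.Ici t).map (e b)).card + ((Finset.Iic t).map (e !b)).card := by
        simp only [Finset.card_map, Fin.card_Ici, Fin.card_Iic]
        omega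
    _ = ((Finset.Ici t).map (e b) ∪ (Finset.Iic t).map (e !b)).card :=
        (Finset.card_union_of_disjoint hdisj).symm
    _ ≤ _ := by
        refine Finset.card_le_card fun p hp => ?_
        simp only [Finset.mem_union, Finset.mem_map, Finset.mem_Ici, Finset.mem_Iic] at hp
        rcases hp with ⟨i, hi, rfl⟩ | ⟨i, hi, rfl⟩
        · exact Finset.mem_filter.mpr ⟨Finset.mem_univ _, mem_climbPath_tail (.inl ⟨rfl, hi⟩)⟩
        · exact Finset.mem_filter.mpr
            ⟨Finset.mem_univ _, mem_climbPath_tail (.inr ⟨(Bool.not_not b).symm, hi⟩)⟩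

theorem exists_climbPath_cover :
    ∃ (m : ℕ) (P : Fin m → List (LadderNode h C)) (x : Fin m → ℝ),
      (∀ i, IsRootedPath (Sum.inl () : LadderNode h C) (P i) ∧
        pathRegret (ladderMetric h C) (Sum.inl ()) (P i) ≤ 1) ∧
      (∀ i, 0 ≤ x i) ∧
      (∀ v : LadderNode h C, v ≠ Sum.inl () →
        1 ≤ ∑ i ∈ Finset.univ.filter (fun i : Fin m => v ∈ (P i).tail), x i) ∧
      ∑ i, x i = (C * (2 * h - 1) * 2 : ℕ) / (2 * h : ℝ) := by
  let e := Fintype.equivFin (Fin C × Fin (2 * h - 1) × Bool)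
  let P (p : Fin C × Fin (2 * h - 1) × Bool) : List (LadderNode h C) := climbPath p.1 p.2.1 p.2.2
  refine ⟨_, P ∘ e.symm, fun _ => (2 * h : ℝ)⁻¹,
    fun k => ⟨isRootedPath_climbPath _ (e.symm k).2.1.isLt _,
      pathRegret_climbPath_le_one _ (e.symm k).2.1.isLt _⟩,
    fun _ => by positivity, ?_, ?_⟩
  · rintro (_ | ⟨j, t, b⟩) hv
    · exact absurd rfl hv
    have hcard : 2 * h ≤ (Finset.univ.filter fun k => .inr (j, t, b) ∈ (P (e.symm k)).tail).card :=
      (two_mul_le_card_climbPath_cover j t b).trans_eq (Finset.card_equiv e fun p => by simp [P])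
    have h2h : (0 : ℝ) < 2 * h := by have := t.isLt; exact_mod_cast (show 0 < 2 * h by omega)
    rw [Finset.sum_const, nsmul_eq_mul, ← div_eq_mul_inv, le_div_iff₀ h2h, one_mul]
    exact_mod_cast hcard
  · simp only [Finset.sum_const, Finset.card_univ, Fintype.card_fin, Fintype.card_prod,
      Fintype.card_bool, nsmul_eq_mul, div_eq_mul_inv]
    push_cast
    ring

theorem two_mul_level_le_pathRegret {j : Fin C} {i : Fin (2 * h - 1)} {b : Bool}
    (t : List (LadderNode h C)) (hz : .inr (j, i, b) ∈ t)
    (hlast : copyOf (t.getLastD (.inl ())) ≠ some j) :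
    2 * h * (i + 1 : ℝ) ≤ pathRegret (ladderMetric h C) (.inl ()) (.inl () :: t) := by
  have := sub_add_sub_le_pathCost (ladderMetric h C) (φ := fun z => h * level z)
    level_sub_le_ladderMetric (copyPotential_sub_le_ladderMetric j) (.inl ()) t
    (List.mem_cons_of_mem _ hz)
  simp only [copyPotential, copyOf_inr, if_true, hlast, if_false] at this
  simp only [pathRegret, List.getLastD_cons, ladderMetric_root, level] at this ⊢
  push_cast at this
  linarith

theorem length_sub_level_le_pathRegret (hh : 1 ≤ h) (t : List (LadderNode h C))
    (hnd : (.inl () :: t).Nodup) :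
    t.length - (level (t.getLastD (.inl ())) : ℝ) ≤
      pathRegret (ladderMetric h C) (.inl ()) (.inl () :: t) := by
  have hf (x y : LadderNode h C) (hxy : x ≠ y) :
      (h - 1 : ℝ) * level y - (h - 1) * level x + 1 ≤ ladderMetric h C x y := by
    have h₁ := level_sub_le_ladderMetric x y
    have h₂ := one_le_ladderMetric hxy
    have hh' : (1 : ℝ) ≤ h := by exact_mod_cast hh
    rcases le_or_gt (level y) (level x) with hle | hlt
    · have : (level y : ℝ) ≤ level x := by exact_mod_cast hle
      nlinarith
    · have : (level x : ℝ) + 1 ≤ level y := by exact_mod_cast hlt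
      nlinarith
  have := sub_add_length_le_pathCost _ hf _ t hnd
  simp only [pathRegret, List.getLastD_cons, ladderMetric_root, level] at this ⊢
  push_cast at this
  linarith

theorem two_mul_sub_one_le_pathRegret (hh : 1 ≤ h) {j : Fin C} (t : List (LadderNode h C))
    (hnd : (.inl () :: t).Nodup) (hcopy : ∀ i b, .inr (j, i, b) ∈ t) :
    2 * h - 1 ≤ pathRegret (ladderMetric h C) (.inl ()) (.inl () :: t) := by
  have hlen : 2 * (2 * h - 1) ≤ t.length :=
    calc 2 * (2 * h - 1)
        = (Finset.univ.image fun p : Fin (2 * h - 1) × Bool => .inr (j, p.1, p.2)).card := by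
          rw [Finset.card_image_of_injective _ (fun p q hpq => by simpa [Prod.ext_iff] using hpq)]
          simp [mul_comm]
      _ ≤ t.toFinset.card := Finset.card_le_card fun x hx => by
          obtain ⟨p, -, rfl⟩ := Finset.mem_image.mp hx
          exact List.mem_toFinset.mpr (hcopy _ _)
      _ ≤ t.length := List.toFinset_card_le t
  have hlev := level_le (t.getLastD (.inl ()))
  have hsteps : (2 * h + level (t.getLastD (.inl ())) : ℝ) ≤ t.length + 1 := by
    exact_mod_cast (show 2 * h + level (t.getLastD (.inl ())) ≤ t.length + 1 by omega)
  linarith [length_sub_level_le_pathRegret hh t hnd]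

theorem eq_of_mem_of_pathRegret_lt {j₁ j₂ : Fin C} {i₁ i₂ : Fin (2 * h - 1)} {b₁ b₂ : Bool}
    (t : List (LadderNode h C)) (h₁ : .inr (j₁, i₁, b₁) ∈ t) (h₂ : .inr (j₂, i₂, b₂) ∈ t)
    (hreg : pathRegret (ladderMetric h C) (.inl ()) (.inl () :: t) < 2 * h - 1) : j₁ = j₂ := by
  by_contra hne
  have key : ∀ {j i b}, .inr (j, i, b) ∈ t → copyOf (t.getLastD (.inl ())) = some j := by
    intro j i b hz
    by_contra hlast
    have := two_mul_level_le_pathRegret t hz hlast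
    have : (0 : ℝ) ≤ 2 * h * i := by positivity
    linarith
  exact hne (Option.some_injective _ ((key h₁).symm.trans (key h₂)))

theorem two_mul_le_of_cover (hh : 1 ≤ h) {n : ℕ} (Q : Fin n → List (LadderNode h C))
    (hQ : ∀ p, IsRootedPath (.inl ()) (Q p) ∧
      pathRegret (ladderMetric h C) (.inl ()) (Q p) < 2 * (h : ℝ) - 1)
    (hcov : ∀ v : LadderNode h C, v ≠ .inl () → ∃ p, v ∈ (Q p).tail) : 2 * C ≤ n := by
  have hroot (p) : Q p = .inl () :: (Q p).tail := (hQ p).1.eq_cons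
  have hreg (p) := hroot p ▸ (hQ p).2
  have htwo (j : Fin C) : ∃ p₁ p₂, p₁ ≠ p₂ ∧ (∃ i b, .inr (j, i, b) ∈ (Q p₁).tail) ∧
      ∃ i b, .inr (j, i, b) ∈ (Q p₂).tail := by
    obtain ⟨p₁, hp₁⟩ := hcov (.inr (j, ⟨0, by omega⟩, true)) (by simp)
    obtain ⟨i, b, hmiss⟩ : ∃ i b, .inr (j, i, b) ∉ (Q p₁).tail := by
      by_contra! hall
      have hnd := hroot p₁ ▸ (hQ p₁).1.2
      linarith [two_mul_sub_one_le_pathRegret hh _ hnd hall, hreg p₁]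
    obtain ⟨p₂, hp₂⟩ := hcov (.inr (j, i, b)) (by simp)
    exact ⟨p₁, p₂, fun e => hmiss (e ▸ hp₂), ⟨_, _, hp₁⟩, ⟨_, _, hp₂⟩⟩
  choose p₁ p₂ hne h₁ h₂ using htwo
  have hinj : Function.Injective fun jb : Fin C × Bool => if jb.2 then p₁ jb.1 else p₂ jb.1 := by
    have hhit (j : Fin C) (b : Bool) :
        ∃ i c, .inr (j, i, c) ∈ (Q (if b then p₁ j else p₂ j)).tail := by
      cases b
      exacts [h₂ j, h₁ j]
    rintro ⟨j, b⟩ ⟨j', b'⟩ he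
    obtain ⟨i, c, hi⟩ := hhit j b
    obtain ⟨i', c', hi'⟩ := hhit j' b'
    obtain rfl : j = j' := eq_of_mem_of_pathRegret_lt _ hi ((congrArg Q he) ▸ hi') (hreg _)
    cases b <;> cases b' <;> simp only [Bool.false_eq_true, if_true, if_false] at he
    exacts [rfl, absurd he.symm (hne j), absurd he (hne j), rfl]
  simpa [mul_comm] using Fintype.card_le_of_injective _ hinj

end Ladder

open scoped Classical in
theorem krvrp_lp_integrality_gap_general (h cc : ℕ) (hh : 1 ≤ h) :
    (∃ (m : ℕ) (P : Fin m → List (LadderNode h (cc * h))) (x : Fin m → ℝ),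
      (∀ i, IsRootedPath (Sum.inl () : LadderNode h (cc * h)) (P i) ∧
        pathRegret (ladderMetric h (cc * h)) (Sum.inl ()) (P i) ≤ 1) ∧
      (∀ i, 0 ≤ x i) ∧
      (∀ v : LadderNode h (cc * h), v ≠ Sum.inl () →
        1 ≤ ∑ i ∈ Finset.univ.filter (fun i : Fin m => v ∈ (P i).tail), x i) ∧
      ∑ i, x i ≤ ((cc * (2 * h - 1) : ℕ) : ℝ)) ∧
    (∀ (n : ℕ) (Q : Fin n → List (LadderNode h (cc * h))),
      (∀ j, IsRootedPath (Sum.inl () : LadderNode h (cc * h)) (Q j) ∧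
        pathRegret (ladderMetric h (cc * h)) (Sum.inl ()) (Q j) < 2 * (h : ℝ) - 1) →
      (∀ v : LadderNode h (cc * h), v ≠ Sum.inl () → ∃ j, v ∈ (Q j).tail) →
      2 * cc * h ≤ n) := by
  refine ⟨?_, fun n Q hQ hcov => mul_assoc 2 cc h ▸ Ladder.two_mul_le_of_cover hh Q hQ hcov⟩
  obtain ⟨m, P, x, hP, hx, hcover, hsum⟩ := Ladder.exists_climbPath_cover (h := h) (C := cc * h)
  refine ⟨m, P, x, hP, hx, hcover, hsum.trans_le (le_of_eq ?_)⟩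
  have : (h : ℝ) ≠ 0 := by exact_mod_cast (show h ≠ 0 by omega)
  field_simp
  push_cast
  ring

open scoped Classical in
/-- for integers `h, c ≥ 1` and `k = c·(2h−1)`, the RVRP instance given by the
shortest-path metric of `c·h` disjoint copies of `L_h` sharing the root satisfies:
(a) the configuration LP (P) with regret bound `R = 1` has a feasible fractional solution of
value at most `k`; and (b) every collection of rooted paths, each of regret strictly less than
`2h−1`, covering all non-root nodes, contains at least `k + c = 2ch` paths. -/
theorem krvrp_lp_integrality_gap (h cc : ℕ) (hh : 1 ≤ h) (hcc : 1 ≤ cc) :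
    (∃ (m : ℕ) (P : Fin m → List (LadderNode h (cc * h))) (x : Fin m → ℝ),
      (∀ i, IsRootedPath (Sum.inl () : LadderNode h (cc * h)) (P i) ∧
        pathRegret (ladderMetric h (cc * h)) (Sum.inl ()) (P i) ≤ 1) ∧
      (∀ i, 0 ≤ x i) ∧
      (∀ v : LadderNode h (cc * h), v ≠ Sum.inl () →
        1 ≤ ∑ i ∈ Finset.univ.filter (fun i : Fin m => v ∈ (P i).tail), x i) ∧
      ∑ i, x i ≤ ((cc * (2 * h - 1) : ℕ) : ℝ)) ∧
    (∀ (n : ℕ) (Q : Fin n → List (LadderNode h (cc * h))),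
      (∀ j, IsRootedPath (Sum.inl () : LadderNode h (cc * h)) (Q j) ∧
        pathRegret (ladderMetric h (cc * h)) (Sum.inl ()) (Q j) < 2 * (h : ℝ) - 1) →
      (∀ v : LadderNode h (cc * h), v ≠ Sum.inl () → ∃ j, v ∈ (Q j).tail) →
      2 * cc * h ≤ n) :=
  krvrp_lp_integrality_gap_general h cc hh
end

section
/- Let (V, c) be a finite metric space with |V| ≥ 2, let r ∈ V, and let D > 0. Extend the metric to V ∪ {r'} for a new node r' by setting c'(v, r') = c(v, r) + D for every v ∈ V (and c' = c on V). Then there exists a single path rooted at r in the extended metric that covers all nodes of (V \ {r}) ∪ {r'} and has regret at most D if and only if there exists a Hamiltonian cycle through all nodes of V of total length at most D. -/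
/-- The metric on `V ∪ {r'}` extending `c`, where the new node `r'` (encoded as `none`)
satisfies `c'(v, r') = c(v, r) + D` for every `v ∈ V`. -/
def extMetric {α : Type*} (c : α → α → ℝ) (r : α) (D : ℝ) : Option α → Option α → ℝ
  | some u, some v => c u v
  | some u, none => c u r + D
  | none, some v => c v r + D
  | none, none => 0

/-!
The new node `r'` behaves like a copy of `r` pushed away by `D`. A rooted path that visits `r'`
before its last node `x` costs, by the triangle inequality, at least
`c'(r, r') + c'(r', x) = 2 D + c(r, x)`, so its regret is at least `2 D > D`. Hence a path of
regret at most `D` has the form `r, v₁, …, vₖ, r'`, and its regret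
`c(r, v₁) + ⋯ + c(vₖ₋₁, vₖ) + (c(vₖ, r) + D) - D` is exactly the length of the Hamiltonian
cycle `r, v₁, …, vₖ, r`. Conversely, every Hamiltonian cycle can be rotated to start at `r`.
-/
namespace pathCost

variable {α β : Type*} (c : α → α → ℝ)

theorem map (f : β → α) : ∀ l : List β,
    pathCost c (l.map f) = pathCost (fun a b => c (f a) (f b)) l
  | [] | [_] => rfl
  | a :: b :: l => by simp only [List.map_cons, pathCost, ← map f (b :: l)]

theorem cons_append_singleton (a x : α) : ∀ l : List α,
    pathCost c (a :: l ++ [x]) = pathCost c (a :: l) + c (l.getLastD a) x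
  | [] => by simp [pathCost]
  | b :: l => by
    simp only [List.cons_append, pathCost, List.getLastD_cons]
    rw [← List.cons_append, cons_append_singleton b x l]
    ring

theorem append_cons (x : α) (l₂ : List α) : ∀ l₁ : List α,
    pathCost c (l₁ ++ x :: l₂) = pathCost c (l₁ ++ [x]) + pathCost c (x :: l₂)
  | [] => by simp [pathCost]
  | [a] => by simp [pathCost]
  | a :: b :: l => by
    simp only [List.cons_append, pathCost]
    rw [← List.cons_append, ← List.cons_append, append_cons x l₂ (b :: l)]
    ring

variable {c}

theorem dist_le (htri : ∀ u v w, c u v ≤ c u w + c w v) (hrefl : ∀ u, c u u = 0) :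
    ∀ (a : α) (l : List α), c a (l.getLastD a) ≤ pathCost c (a :: l)
  | a, [] => by simp [pathCost, hrefl]
  | a, b :: l => by
    rw [List.getLastD_cons, pathCost]
    exact (htri _ _ _).trans (add_le_add_right (dist_le htri hrefl b l) _)

theorem dist_add_dist_le (htri : ∀ u v w, c u v ≤ c u w + c w v) (hrefl : ∀ u, c u u = 0)
    (a y : α) (l₁ l₂ : List α) :
    c a y + c y (l₂.getLastD y) ≤ pathCost c (a :: l₁ ++ y :: l₂) := by
  rw [append_cons]
  have := dist_le htri hrefl a (l₁ ++ [y])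
  rw [List.getLastD_concat] at this
  exact add_le_add this (dist_le htri hrefl y l₂)

theorem cycle_rotate_one (d : α) (l : List α) :
    pathCost c (l.rotate 1 ++ [(l.rotate 1).headD d]) = pathCost c (l ++ [l.headD d]) := by
  rcases l with _ | ⟨a, _ | ⟨b, m⟩⟩
  · rfl
  · simp
  · rw [show (a :: b :: m).rotate 1 = b :: (m ++ [a]) by simp, List.headD_cons,
      cons_append_singleton, List.getLastD_concat]
    simp only [List.cons_append, List.headD_cons, pathCost]
    ring

theorem cycle_rotate (d : α) (l : List α) (n : ℕ) :
    pathCost c (l.rotate n ++ [(l.rotate n).headD d]) = pathCost c (l ++ [l.headD d]) := by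
  induction n with
  | zero => simp
  | succ n ih => rw [← List.rotate_rotate, cycle_rotate_one, ih]

end pathCost

theorem List.exists_eq_map_some {α : Type*} : ∀ {l : List (Option α)}, none ∉ l →
    ∃ m : List α, l = m.map some
  | [], _ => ⟨[], rfl⟩
  | none :: _, h => absurd List.mem_cons_self h
  | some a :: l, h => by
    obtain ⟨m, rfl⟩ := exists_eq_map_some (l := l) fun hl => h (List.mem_cons_of_mem _ hl)
    exact ⟨a :: m, rfl⟩

section extMetric

variable {α : Type*} {c : α → α → ℝ} {r : α} {D : ℝ}

theorem extMetric_self (hrefl : ∀ u, c u u = 0) : ∀ x, extMetric c r D x x = 0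
  | some u => hrefl u
  | none => rfl

theorem extMetric_triangle (hsymm : ∀ u v, c u v = c v u) (hnn : ∀ u v, 0 ≤ c u v)
    (htri : ∀ u v w, c u v ≤ c u w + c w v) (hD : 0 ≤ D) :
    ∀ x y z, extMetric c r D x y ≤ extMetric c r D x z + extMetric c r D z y := by
  rintro (_ | u) (_ | v) (_ | w) <;> simp only [extMetric]
  · linarith
  · linarith [hnn w r]
  · linarith
  · linarith [htri v r w, hsymm v w]
  · linarith
  · linarith [htri u r w]
  · linarith [htri u v r, hsymm r v, hnn u r, hnn v r]
  · exact htri u v w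

variable (r) in
def routeToCopy (m : List α) : List (Option α) :=
  (r :: m).map some ++ [none]

theorem isRootedPath_routeToCopy_iff (m : List α) :
    IsRootedPath (some r) (routeToCopy r m) ↔ (r :: m).Nodup := by
  simp [IsRootedPath, routeToCopy, List.nodup_append, List.nodup_map_iff (Option.some_injective α)]

theorem covers_routeToCopy_iff (m : List α) :
    (∀ v, v ≠ r → some v ∈ (routeToCopy r m).tail) ↔ ∀ v, v ∈ r :: m := by
  simp [routeToCopy, or_iff_not_imp_left]

theorem pathRegret_routeToCopy (hr : c r r = 0) (m : List α) :
    pathRegret (extMetric c r D) (some r) (routeToCopy r m) = pathCost c (r :: m ++ [r]) := by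
  rw [pathRegret, routeToCopy, List.getLastD_concat, List.map_cons,
    pathCost.cons_append_singleton, ← List.map_cons, pathCost.map, List.getLastD_map,
    pathCost.cons_append_singleton]
  simp only [extMetric, hr]
  ring

theorem two_mul_le_pathRegret_of_copy_not_last (hsymm : ∀ u v, c u v = c v u)
    (hnn : ∀ u v, 0 ≤ c u v) (htri : ∀ u v w, c u v ≤ c u w + c w v) (hrefl : ∀ u, c u u = 0)
    (hD : 0 ≤ D) (t : List (Option α)) (x : Option α) (q : List (Option α))
    (hx : none ∉ x :: q) :
    2 * D ≤ pathRegret (extMetric c r D) (some r) (some r :: (t ++ none :: x :: q)) := by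
  obtain ⟨z, hz⟩ : ∃ z, q.getLastD x = some z :=
    Option.ne_none_iff_exists'.1 fun h => hx (h ▸ List.getLastD_mem_cons)
  have hcost := pathCost.dist_add_dist_le (extMetric_triangle hsymm hnn htri hD)
    (extMetric_self (r := r) hrefl) (some r) none t (x :: q)
  rw [List.cons_append] at hcost
  have hlast : (some r :: (t ++ none :: x :: q)).getLastD (some r) = q.getLastD x := by
    simp [List.getLast?_append, List.getLast?_cons]
  rw [List.getLastD_cons, hz] at hcost
  rw [pathRegret, hlast, hz]
  simp only [extMetric] at hcost ⊢
  linarith [hrefl r, hsymm z r]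

theorem exists_eq_routeToCopy_of_pathRegret_le (hsymm : ∀ u v, c u v = c v u) (hnn : ∀ u v, 0 ≤ c u v)
    (htri : ∀ u v w, c u v ≤ c u w + c w v) (hrefl : ∀ u, c u u = 0) (hD : 0 < D)
    {w : List (Option α)} (hw : IsRootedPath (some r) w) (hcopy : none ∈ w.tail)
    (hreg : pathRegret (extMetric c r D) (some r) w ≤ D) :
    ∃ m, w = routeToCopy r m := by
  obtain ⟨hhead, hnodup⟩ := hw
  obtain ⟨t, rfl⟩ := List.head?_eq_some_iff.1 hhead
  obtain ⟨t₁, t₂, rfl⟩ := List.append_of_mem hcopy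
  rw [← List.cons_append, List.nodup_append] at hnodup
  obtain ⟨-, hnodup₂, hdisj⟩ := hnodup
  rcases t₂ with _ | ⟨x, q⟩
  · obtain ⟨m, rfl⟩ := List.exists_eq_map_some fun h =>
      hdisj none (List.mem_cons_of_mem _ h) none List.mem_cons_self rfl
    exact ⟨m, rfl⟩
  · have := two_mul_le_pathRegret_of_copy_not_last (r := r) hsymm hnn htri hrefl hD.le t₁ x q
      (List.nodup_cons.1 hnodup₂).1
    linarith

end extMetric

theorem single_path_iff_tsp_general {α : Type*}
    (c : α → α → ℝ)
    (hsymm : ∀ u v, c u v = c v u) (hnn : ∀ u v, 0 ≤ c u v)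
    (htri : ∀ u v w, c u v ≤ c u w + c w v) (hrefl : ∀ u, c u u = 0)
    (r : α) (D : ℝ) (hD : 0 < D) :
    (∃ w : List (Option α),
        IsRootedPath (some r) w ∧
        (∀ v : α, v ≠ r → some v ∈ w.tail) ∧ (none ∈ w.tail) ∧
        pathRegret (extMetric c r D) (some r) w ≤ D) ↔
    (∃ l : List α, l ≠ [] ∧ l.Nodup ∧ (∀ v : α, v ∈ l) ∧
        pathCost c (l ++ [l.headD r]) ≤ D) := by
  constructor
  · rintro ⟨w, hw, hcover, hcopy, hreg⟩
    obtain ⟨m, rfl⟩ := exists_eq_routeToCopy_of_pathRegret_le hsymm hnn htri hrefl hD hw hcopy hreg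
    rw [isRootedPath_routeToCopy_iff] at hw
    rw [covers_routeToCopy_iff] at hcover
    rw [pathRegret_routeToCopy (hrefl r)] at hreg
    exact ⟨r :: m, List.cons_ne_nil _ _, hw, hcover, hreg⟩
  · rintro ⟨l, -, hnodup, hcover, hcost⟩
    obtain ⟨s, t, rfl⟩ := List.append_of_mem (hcover r)
    have hrot : (s ++ r :: t).rotate s.length = r :: (t ++ s) := List.rotate_append_length_eq _ _
    refine ⟨routeToCopy r (t ++ s), (isRootedPath_routeToCopy_iff _).2 ?_,
      (covers_routeToCopy_iff _).2 ?_, by simp [routeToCopy], ?_⟩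
    · exact hrot ▸ List.nodup_rotate.2 hnodup
    · exact fun v => hrot ▸ List.mem_rotate.2 (hcover v)
    · have hrotCost := pathCost.cycle_rotate (c := c) r (s ++ r :: t) s.length
      rw [hrot] at hrotCost
      rw [pathRegret_routeToCopy (hrefl r)]
      exact hrotCost.le.trans hcost

/-- let `(V, c)` be a finite metric space with `|V| ≥ 2`, `r ∈ V`, `D > 0`, and
extend the metric to `V ∪ {r'}` by `c'(v, r') = c(v, r) + D`.  Then there is a single rooted
path (rooted at `r`) in the extended metric covering all nodes of `(V \ {r}) ∪ {r'}` with
regret at most `D` iff there is a Hamiltonian cycle through all nodes of `V` of total length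
at most `D`. -/
theorem single_path_iff_tsp {α : Type*} [Fintype α] [DecidableEq α]
    (c : α → α → ℝ)
    (hsymm : ∀ u v, c u v = c v u) (hnn : ∀ u v, 0 ≤ c u v)
    (htri : ∀ u v w, c u v ≤ c u w + c w v) (hrefl : ∀ u, c u u = 0)
    (hpos : ∀ u v, u ≠ v → 0 < c u v)
    (hcard : 2 ≤ Fintype.card α)
    (r : α) (D : ℝ) (hD : 0 < D) :
    (∃ w : List (Option α),
        IsRootedPath (some r) w ∧
        (∀ v : α, v ≠ r → some v ∈ w.tail) ∧ (none ∈ w.tail) ∧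
        pathRegret (extMetric c r D) (some r) w ≤ D) ↔
    (∃ l : List α, l ≠ [] ∧ l.Nodup ∧ (∀ v : α, v ∈ l) ∧
        pathCost c (l ++ [l.headD r]) ≤ D) :=
  single_path_iff_tsp_general c hsymm hnn htri hrefl r D hD
end
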